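/- arXiv:1705.07545 — 7 statements merged into one kernel-verified Lean document; each statement's English description precedes it below -/
import Mathlib

section
/- For every prime power q, there exists a Hamiltonian graph on q^2 + q + 1 vertices with exactly q^2 + 2q edges in which no two cycles have the same length. -/
/-- The cycle `C_n` on vertex set `Fin n`, where label `i` represents the integer `i + 1`;
edges join consecutive integers mod `n` (i.e. `{i, i+1}` for `1 ≤ i ≤ n - 1` and `{n, 1}`). -/
def cycG (n : ℕ) : SimpleGraph (Fin n) :=
  SimpleGraph.fromRel (fun i j => (i.val + 1) % n = j.val)

/-- The graph `G_n(S)`: the cycle `C_n` together with a chord `{1, a}` for each `a ∈ S`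
(vertex label `i` represents the integer `i + 1`, so the integer vertex `1` is label `0`
and the integer vertex `a` is label `a - 1`). -/
def GnS (n : ℕ) (S : Finset ℕ) : SimpleGraph (Fin n) :=
  SimpleGraph.fromRel (fun i j => (i.val + 1) % n = j.val ∨ (i.val = 0 ∧ j.val + 1 ∈ S))

/-- A graph on a finite vertex type is Hamiltonian if it has a cycle through all vertices,
i.e. a cycle whose length equals the number of vertices. -/
def IsHamiltonianGraph {V : Type*} [Fintype V] (G : SimpleGraph V) : Prop :=
  ∃ (u : V) (p : G.Walk u u), p.IsCycle ∧ p.length = Fintype.card V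

/-- No two cycles of `G` have the same length: any two cycles with equal length are the same
cycle, i.e. have the same edge set. -/
def NoRepeatedCycleLength {V : Type*} (G : SimpleGraph V) : Prop :=
  ∀ (u v : V) (p : G.Walk u u) (q : G.Walk v v),
    p.IsCycle → q.IsCycle → p.length = q.length →
      {e | e ∈ p.edges} = {e | e ∈ q.edges}

/-!
Singer's construction. Let `K = 𝔽_q ⊆ F = 𝔽_{q³}`. The group `Fˣ ⧸ Kˣ` is cyclic of order
`n = q² + q + 1`. Take the `K`-plane `V = span {1, g}` for a generator `g` of `Fˣ`; only scalars
stabilise it. The nonzero vectors of `V` project onto a set `A` of residues mod `n` in which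
every nonzero residue is a difference in exactly one way: for `d ∉ K` the planes `V` and `d • V`
are distinct, so they meet in exactly one line. Counting differences gives `|A| = q + 1`, and a
translate of `A`, lifted to `{2, …, n}`, is a set `S ∋ 2, n` of integers with distinct positive
differences.

In `G_n(S)` the vertices other than `1` span a path, so a cycle uses two chords `{1, a}`, `{1, b}`
with `a < b` in `S` and the path from `a` to `b`, and has length `b - a + 2`. Distinct differences
make a cycle determined by its length. The `n`-cycle is Hamiltonian and the chords add
`|S| - 2 = q - 1` edges.
-/

open Module Submodule

def IsPerfectDifferenceSet {G : Type*} [AddGroup G] (A : Set G) : Prop :=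
  (∀ d ≠ (0 : G), ∃ a ∈ A, ∃ b ∈ A, a - b = d) ∧
    ∀ a ∈ A, ∀ b ∈ A, ∀ c ∈ A, ∀ d ∈ A, a - b = c - d → a ≠ b → a = c ∧ b = d

section LinearAlgebra

variable {K M : Type*} [Field K] [AddCommGroup M] [Module K M] [FiniteDimensional K M]

theorem Submodule.exists_smul_eq_of_mem_inf_of_not_le {U W : Submodule K M}
    (hU : finrank K U ≤ 2) (hUW : ¬U ≤ W) {x y : M} (hx : x ∈ U ⊓ W) (hy : y ∈ U ⊓ W)
    (hx0 : x ≠ 0) : ∃ a : K, a • x = y := by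
  have hlt : finrank K ↥(U ⊓ W) < finrank K U :=
    finrank_lt_finrank_of_lt (inf_le_left.lt_of_ne fun h => hUW (h ▸ inf_le_right))
  have hpos : 0 < finrank K ↥(U ⊓ W) :=
    finrank_pos_iff_exists_ne_zero.mpr ⟨⟨x, hx⟩, by simpa using hx0⟩
  obtain ⟨a, ha⟩ := exists_smul_eq_of_finrank_eq_one (show finrank K ↥(U ⊓ W) = 1 by omega)
    (x := ⟨x, hx⟩) (by simpa using hx0) ⟨y, hy⟩
  exact ⟨a, congrArg Subtype.val ha⟩

theorem Submodule.inf_ne_bot_of_finrank_lt_add (U W : Submodule K M)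
    (h : finrank K M < finrank K U + finrank K W) : U ⊓ W ≠ ⊥ := by
  intro hbot
  have := finrank_sup_add_finrank_inf_eq U W
  rw [hbot, finrank_bot] at this
  have := finrank_le (U ⊔ W)
  omega

end LinearAlgebra

section Singer

variable {K F : Type*} [Field K] [Field F] [Algebra K F]

theorem Submodule.eq_top_of_one_mem_of_mul_generator_mem [Finite F] {g : Fˣ}
    (hg : ∀ u : Fˣ, u ∈ Subgroup.zpowers g) {V : Submodule K F} (h1 : 1 ∈ V)
    (hV : ∀ v ∈ V, (g : F) * v ∈ V) : V = ⊤ := by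
  have hpow : ∀ m : ℕ, (g : F) ^ m ∈ V := by
    intro m
    induction m with
    | zero => simpa using h1
    | succ m ih => rw [pow_succ']; exact hV _ ih
  refine eq_top_iff.mpr fun x _ => ?_
  rcases eq_or_ne x 0 with rfl | hx
  · exact V.zero_mem
  obtain ⟨m, hm⟩ := mem_powers_iff_mem_zpowers.mpr (hg (Units.mk0 x hx))
  rw [show x = ((g ^ m : Fˣ) : F) by simp only at hm; rw [hm, Units.val_mk0]]
  simpa using hpow m

theorem generator_notMem_range_algebraMap [Finite F] (hF : 1 < finrank K F) {g : Fˣ}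
    (hg : ∀ u : Fˣ, u ∈ Subgroup.zpowers g) : (g : F) ∉ Set.range (algebraMap K F) := by
  rintro ⟨a, ha⟩
  have htop : K ∙ (1 : F) = ⊤ := by
    refine eq_top_of_one_mem_of_mul_generator_mem hg (mem_span_singleton_self 1) fun v hv => ?_
    obtain ⟨b, rfl⟩ := mem_span_singleton.mp hv
    rw [← ha, mul_smul_comm, mul_one, Algebra.algebraMap_eq_smul_one, smul_smul]
    exact smul_mem _ _ (mem_span_singleton_self 1)
  have := finrank_span_singleton (K := K) (one_ne_zero (α := F))
  rw [htop, finrank_top] at this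
  omega

theorem finrank_span_one_generator [Finite F] (hF : 1 < finrank K F) {g : Fˣ}
    (hg : ∀ u : Fˣ, u ∈ Subgroup.zpowers g) : finrank K (span K {1, (g : F)}) = 2 := by
  have hli : LinearIndependent K ![(1 : F), g] := by
    refine LinearIndependent.pair_iff.mpr fun s t hst => ?_
    by_cases ht : t = 0
    · subst ht
      simpa using hst
    refine absurd ⟨-(t⁻¹ * s), ?_⟩ (generator_notMem_range_algebraMap hF hg)
    rw [Algebra.algebraMap_eq_smul_one, neg_smul, mul_smul, ← smul_neg,
      ← eq_neg_of_add_eq_zero_right hst, smul_smul, inv_mul_cancel₀ ht, one_smul]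
  have := finrank_span_eq_card hli
  rwa [Matrix.range_cons_cons_empty] at this

theorem mem_range_algebraMap_of_forall_mul_mem_span [Finite F] (hF : 2 < finrank K F) {g : Fˣ}
    (hg : ∀ u : Fˣ, u ∈ Subgroup.zpowers g) {c : F}
    (hc : ∀ v ∈ span K {1, (g : F)}, c * v ∈ span K {1, (g : F)}) :
    c ∈ Set.range (algebraMap K F) := by
  set V := span K {1, (g : F)}
  have h1V : (1 : F) ∈ V := subset_span (by simp)
  have hgV : (g : F) ∈ V := subset_span (by simp)
  obtain ⟨a, b, hab⟩ := mem_span_pair.mp (by simpa using hc 1 h1V)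
  by_cases hb : b = 0
  · exact ⟨a, by simpa [hb, Algebra.algebraMap_eq_smul_one] using hab⟩
  have hgg : (g : F) * g ∈ V := by
    have hcg : c * g = a • (g : F) + b • ((g : F) * g) := by
      rw [← hab, add_mul, smul_mul_assoc, one_mul, smul_mul_assoc]
    have : (g : F) * g = b⁻¹ • (c * g - a • (g : F)) := by
      rw [hcg, add_sub_cancel_left, smul_smul, inv_mul_cancel₀ hb, one_smul]
    rw [this]
    exact smul_mem _ _ (sub_mem (hc _ hgV) (smul_mem _ _ hgV))
  have htop : V = ⊤ := by
    refine eq_top_of_one_mem_of_mul_generator_mem hg h1V fun v hv => ?_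
    obtain ⟨α, β, rfl⟩ := mem_span_pair.mp hv
    rw [mul_add, mul_smul_comm, mul_smul_comm, mul_one]
    exact add_mem (smul_mem _ _ hgV) (smul_mem _ _ hgg)
  have := finrank_top K F
  rw [← htop, finrank_span_one_generator (by omega) hg] at this
  omega

theorem exists_surjective_hom_units_zmod [Finite F] (h3 : finrank K F = 3) :
    ∃ π : Fˣ →* Multiplicative (ZMod (Nat.card K ^ 2 + Nat.card K + 1)),
      Function.Surjective π ∧ ∀ u, π u = 1 ↔ (u : F) ∈ Set.range (algebraMap K F) := by
  have : Finite K := Finite.of_injective _ (algebraMap K F).injective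
  have hq : 1 < Nat.card K := Finite.one_lt_card
  set N := (Units.map (algebraMap K F : K →* F)).range
  have hcard : Nat.card (Fˣ ⧸ N) =
      Nat.card (Multiplicative (ZMod (Nat.card K ^ 2 + Nat.card K + 1))) := by
    have hF := N.card_eq_card_quotient_mul_card_subgroup
    have hN : Nat.card N = Nat.card Kˣ := Nat.card_congr
      (MonoidHom.ofInjective (Units.map_injective (algebraMap K F).injective)).toEquiv.symm
    rw [hN, Nat.card_units, Nat.card_units, natCard_eq_pow_finrank (K := K), h3] at hF
    rw [Nat.card_eq_fintype_card (α := Multiplicative _), Fintype.card_multiplicative, ZMod.card]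
    obtain ⟨r, hr⟩ : ∃ r, Nat.card K = r + 1 := ⟨Nat.card K - 1, by omega⟩
    rw [hr, Nat.add_sub_cancel] at hF
    rw [hr]
    have hcube : (r + 1) ^ 3 - 1 = ((r + 1) ^ 2 + (r + 1) + 1) * r := by ring_nf; omega
    exact Nat.eq_of_mul_eq_mul_right (by omega : 0 < r) (hF.symm.trans hcube)
  have : IsCyclic (Fˣ ⧸ N) := isCyclic_of_surjective _ (QuotientGroup.mk'_surjective N)
  let e := mulEquivOfCyclicCardEq hcard
  refine ⟨e.toMonoidHom.comp (QuotientGroup.mk' N),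
    e.surjective.comp (QuotientGroup.mk'_surjective N), fun u => ?_⟩
  simp only [MonoidHom.comp_apply, MulEquiv.coe_toMonoidHom, map_eq_one_iff _ e.injective,
    QuotientGroup.mk'_apply, QuotientGroup.eq_one_iff]
  constructor
  · rintro ⟨a, rfl⟩
    exact ⟨a, rfl⟩
  · rintro ⟨a, ha⟩
    have ha0 : a ≠ 0 := by rintro rfl; simp at ha; exact u.ne_zero ha.symm
    exact ⟨Units.mk0 a ha0, Units.ext ha⟩

theorem map_eq_of_smul_eq {G : Type*} [AddCommGroup G] {π : Fˣ →* Multiplicative G}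
    (hker : ∀ u, π u = 1 ↔ (u : F) ∈ Set.range (algebraMap K F))
    {u v : Fˣ} {a : K} (h : a • (u : F) = v) : π u = π v := by
  have hvu : π (v * u⁻¹) = 1 := by
    refine (hker _).mpr ⟨a, ?_⟩
    rw [Units.val_mul, ← h, Algebra.smul_def, mul_assoc, Units.val_inv_eq_inv_val,
      mul_inv_cancel₀ u.ne_zero, mul_one]
  rw [map_mul, map_inv, mul_inv_eq_one] at hvu
  exact hvu.symm

section FiniteDimensional

variable [FiniteDimensional K F] {V : Submodule K F}

theorem smul_eq_or_smul_eq_of_mul_eq (hV : finrank K V = 2)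
    (hstab : ∀ c : F, (∀ v ∈ V, c * v ∈ V) → c ∈ Set.range (algebraMap K F))
    {x y x' y' : F} (hx : x ∈ V) (hy : y ∈ V) (hx' : x' ∈ V) (hy' : y' ∈ V)
    (hx0 : x ≠ 0) (hy0 : y ≠ 0) (hy'0 : y' ≠ 0) {γ : K}
    (h : x * y' = algebraMap K F γ * (x' * y)) :
    (∃ a : K, a • y = x) ∨ (∃ a : K, a • x = x') ∧ ∃ b : K, b • y = y' := by
  -- `x` and `x'` lie in `V ⊓ d • V`: either `d • V = V`, making `d` a scalar, or the two planes
  -- meet in a line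
  set d := x * y⁻¹
  set W := V.map (LinearMap.mulLeft K d)
  have hγ : γ ≠ 0 := by
    rintro rfl
    simp only [map_zero, zero_mul, mul_eq_zero] at h
    tauto
  have hxW : x ∈ W := ⟨y, hy, by simp [d, hy0]⟩
  have hx'W : x' ∈ W := by
    refine ⟨γ⁻¹ • y', smul_mem _ _ hy', ?_⟩
    have : algebraMap K F γ ≠ 0 := by simpa using hγ
    simp only [LinearMap.mulLeft_apply, d, Algebra.smul_def, map_inv₀]
    field_simp
    linear_combination h
  by_cases hVW : V ≤ W
  · left
    have hd : d ≠ 0 := by simp [d, hx0, hy0]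
    obtain ⟨a, ha⟩ := hstab d⁻¹ fun v hv => by
      obtain ⟨w, hw, rfl⟩ := hVW hv
      simpa [LinearMap.mulLeft_apply, hd] using hw
    refine ⟨a⁻¹, ?_⟩
    rw [Algebra.smul_def, map_inv₀, ha, inv_inv]
    simp [d, hy0]
  · right
    obtain ⟨a, ha⟩ := exists_smul_eq_of_mem_inf_of_not_le hV.le hVW ⟨hx, hxW⟩ ⟨hx', hx'W⟩ hx0
    refine ⟨⟨a, ha⟩, γ * a, mul_left_cancel₀ hx0 ?_⟩
    rw [h, ← ha]
    simp only [Algebra.smul_def, map_mul]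
    ring

theorem exists_mul_mem_of_finrank_eq_two (h3 : finrank K F ≤ 3) (hV : finrank K V = 2) {d : F}
    (hd : d ≠ 0) : ∃ y ∈ V, y ≠ 0 ∧ d * y ∈ V := by
  set W := V.map (LinearMap.mulLeft K d)
  have hW : finrank K W = 2 := by
    rw [← hV]
    exact (equivMapOfInjective _ (mul_right_injective₀ hd) V).finrank_eq.symm
  obtain ⟨x, ⟨hxV, y, hy, rfl⟩, hx0⟩ :=
    exists_mem_ne_zero_of_ne_bot (inf_ne_bot_of_finrank_lt_add V W (by omega))
  exact ⟨y, hy, by rintro rfl; simp at hx0, hxV⟩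

theorem isPerfectDifferenceSet_of_finrank_eq_two {G : Type*} [AddCommGroup G]
    {π : Fˣ →* Multiplicative G} (h3 : finrank K F ≤ 3) (hV : finrank K V = 2)
    (hstab : ∀ c : F, (∀ v ∈ V, c * v ∈ V) → c ∈ Set.range (algebraMap K F))
    (hπ : Function.Surjective π)
    (hker : ∀ u, π u = 1 ↔ (u : F) ∈ Set.range (algebraMap K F)) :
    IsPerfectDifferenceSet {z : G | ∃ u : Fˣ, (u : F) ∈ V ∧ (π u).toAdd = z} := by
  refine ⟨fun d _ => ?_, ?_⟩
  · obtain ⟨w, hw⟩ := hπ (Multiplicative.ofAdd d)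
    obtain ⟨y, hy, hy0, hwy⟩ := exists_mul_mem_of_finrank_eq_two h3 hV w.ne_zero
    refine ⟨_, ⟨w * Units.mk0 y hy0, by simpa using hwy, rfl⟩, _, ⟨Units.mk0 y hy0, hy, rfl⟩, ?_⟩
    rw [map_mul, toAdd_mul, hw, add_sub_cancel_right, toAdd_ofAdd]
  · rintro _ ⟨x, hx, rfl⟩ _ ⟨y, hy, rfl⟩ _ ⟨x', hx', rfl⟩ _ ⟨y', hy', rfl⟩ hdiff hne
    obtain ⟨γ, hγ⟩ := (hker (x * y' * (x' * y)⁻¹)).mp <| by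
      rw [map_mul, map_inv, map_mul, map_mul, mul_inv_eq_one]
      apply Multiplicative.toAdd.injective
      rw [toAdd_mul, toAdd_mul, ← sub_eq_sub_iff_add_eq_add.mp hdiff]
    have hmul : (x : F) * y' = algebraMap K F γ * (x' * y) := by
      rw [hγ]
      simp only [Units.val_mul, Units.val_inv_eq_inv_val]
      field_simp
    rcases smul_eq_or_smul_eq_of_mul_eq hV hstab hx hy hx' hy' x.ne_zero y.ne_zero y'.ne_zero hmul
      with ⟨a, ha⟩ | ⟨⟨a, ha⟩, b, hb⟩
    · exact absurd (congrArg _ (map_eq_of_smul_eq hker ha)).symm hne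
    · exact ⟨congrArg _ (map_eq_of_smul_eq hker ha), congrArg _ (map_eq_of_smul_eq hker hb)⟩

end FiniteDimensional

theorem exists_perfectDifferenceSet_zmod [Finite F] (h3 : finrank K F = 3) {q : ℕ}
    (hq : Nat.card K = q) :
    ∃ A : Finset (ZMod (q ^ 2 + q + 1)),
      IsPerfectDifferenceSet (A : Set (ZMod (q ^ 2 + q + 1))) := by
  subst hq
  obtain ⟨g, hg⟩ := IsCyclic.exists_generator (α := Fˣ)
  obtain ⟨π, hπ, hker⟩ := exists_surjective_hom_units_zmod h3
  have hA := isPerfectDifferenceSet_of_finrank_eq_two h3.le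
    (finrank_span_one_generator (by omega) hg)
    (fun c hc => mem_range_algebraMap_of_forall_mul_mem_span (by omega) hg hc) hπ hker
  exact ⟨(Set.toFinite _).toFinset, by rwa [Set.Finite.coe_toFinset]⟩

end Singer

open Finset

theorem IsPerfectDifferenceSet.card_mul_card_sub_card {G : Type*} [AddGroup G] [Fintype G]
    [DecidableEq G] {A : Finset G} (hA : IsPerfectDifferenceSet (A : Set G)) :
    #A * #A - #A = Fintype.card G - 1 := by
  rw [← offDiag_card, ← card_univ, ← card_erase_of_mem (mem_univ 0)]
  refine card_bij (fun p _ => p.1 - p.2) (fun p hp => ?_) (fun p hp p' hp' h => ?_) fun d hd => ?_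
  · obtain ⟨-, -, hne⟩ := mem_offDiag.mp hp
    simpa [sub_eq_zero] using hne
  · obtain ⟨h1, h2, hne⟩ := mem_offDiag.mp hp
    obtain ⟨h1', h2', -⟩ := mem_offDiag.mp hp'
    obtain ⟨e1, e2⟩ := hA.2 _ h1 _ h2 _ h1' _ h2' h hne
    exact Prod.ext e1 e2
  · obtain ⟨a, ha, b, hb, rfl⟩ := hA.1 d (ne_of_mem_erase hd)
    refine ⟨(a, b), mem_offDiag.mpr ⟨ha, hb, fun hab => ?_⟩, rfl⟩
    exact (mem_erase.mp hd).1 (sub_eq_zero.mpr hab)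

theorem IsPerfectDifferenceSet.sub_ne_of_sub_eq_add_self {G : Type*} [AddCommGroup G]
    {A : Set G} (hA : IsPerfectDifferenceSet A) {a b d : G} (ha : a ∈ A) (hb : b ∈ A)
    (hab : a - b = d + d) (hd : d ≠ 0) {z : G} (hz : z ∈ A) : z - b ≠ d := by
  intro hzb
  have hdiff : a - z = z - b := by
    rw [show a - z = (a - b) - (z - b) by abel, hab, hzb, add_sub_cancel_right]
  have hne : a ≠ z := by
    rintro rfl
    exact hd (by simpa using hab.symm.trans hzb)
  exact hne (hA.2 a ha z hz z hz b hb hdiff hne).1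

namespace ZMod

theorem eq_of_natCast_eq_of_mem_Icc {n x y : ℕ} (hx : x ∈ Set.Icc 1 n) (hy : y ∈ Set.Icc 1 n)
    (h : (x : ZMod n) = y) : x = y := by
  rw [natCast_eq_natCast_iff'] at h
  obtain ⟨hx1, hxn⟩ := hx
  obtain ⟨hy1, hyn⟩ := hy
  rcases hxn.eq_or_lt with rfl | hxn <;> rcases hyn.eq_or_lt with rfl | hyn
  · rfl
  · rw [Nat.mod_self, Nat.mod_eq_of_lt hyn] at h; omega
  · rw [Nat.mod_self, Nat.mod_eq_of_lt hxn] at h; omega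
  · rwa [Nat.mod_eq_of_lt hxn, Nat.mod_eq_of_lt hyn] at h

variable {n : ℕ} [NeZero n]

def valIcc (z : ZMod n) : ℕ := (z - 1).val + 1

theorem natCast_valIcc (z : ZMod n) : (z.valIcc : ZMod n) = z := by
  simp [valIcc]

theorem valIcc_mem_Icc (z : ZMod n) : z.valIcc ∈ Set.Icc 1 n :=
  ⟨Nat.le_add_left 1 _, (z - 1).val_lt⟩

theorem valIcc_natCast {x : ℕ} (hx : x ∈ Set.Icc 1 n) : (x : ZMod n).valIcc = x :=
  eq_of_natCast_eq_of_mem_Icc (valIcc_mem_Icc _) hx (natCast_valIcc _)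

theorem valIcc_injective : Function.Injective (valIcc (n := n)) := fun z z' h => by
  rw [← natCast_valIcc z, h, natCast_valIcc]

end ZMod

def HasDistinctDifferences (S : Finset ℕ) : Prop :=
  ∀ a ∈ S, ∀ b ∈ S, ∀ c ∈ S, ∀ d ∈ S, a < b → c < d → b - a = d - c → a = c ∧ b = d

theorem IsPerfectDifferenceSet.exists_hasDistinctDifferences {n : ℕ} (hn : 3 ≤ n)
    {A : Finset (ZMod n)} (hA : IsPerfectDifferenceSet (A : Set (ZMod n))) :
    ∃ S : Finset ℕ, #S = #A ∧ (∀ a ∈ S, 2 ≤ a ∧ a ≤ n) ∧ 2 ∈ S ∧ n ∈ S ∧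
      HasDistinctDifferences S := by
  have : Fact (1 < n) := ⟨by omega⟩
  have h20 : (2 : ZMod n) ≠ 0 := by
    rw [← Nat.cast_ofNat, Ne, ZMod.natCast_eq_zero_iff]
    exact Nat.not_dvd_of_pos_of_lt two_pos (by omega)
  obtain ⟨a, ha, b, hb, hab⟩ := hA.1 2 h20
  have hb1 : ∀ z ∈ A, z - b ≠ 1 := fun z hz =>
    hA.sub_ne_of_sub_eq_add_self ha hb (by rw [hab]; norm_num) one_ne_zero hz
  refine ⟨A.image fun z => (z - b).valIcc, ?_, ?_, ?_, ?_, ?_⟩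
  · exact card_image_of_injective _ (ZMod.valIcc_injective.comp (sub_left_injective (b := b)))
  · simp only [mem_image]
    rintro _ ⟨z, hz, rfl⟩
    refine ⟨?_, (ZMod.valIcc_mem_Icc _).2⟩
    by_contra hlt
    have h1 : (z - b).valIcc = 1 := by have := (ZMod.valIcc_mem_Icc (z - b)).1; omega
    exact hb1 z hz (by rw [← ZMod.natCast_valIcc (z - b), h1, Nat.cast_one])
  · exact mem_image.mpr ⟨a, ha, by
      simpa [hab] using ZMod.valIcc_natCast (n := n) (x := 2) ⟨by omega, by omega⟩⟩
  · exact mem_image.mpr ⟨b, hb, by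
      simpa using ZMod.valIcc_natCast (n := n) (x := n) ⟨by omega, le_rfl⟩⟩
  · simp only [HasDistinctDifferences, mem_image]
    rintro _ ⟨z₁, h₁, rfl⟩ _ ⟨z₂, h₂, rfl⟩ _ ⟨z₃, h₃, rfl⟩ _ ⟨z₄, h₄, rfl⟩ h12 h34 hd
    have hz : z₂ - z₁ = z₄ - z₃ := by
      have := congrArg (fun x : ℕ => (x : ZMod n))
        (show (z₂ - b).valIcc + (z₃ - b).valIcc = (z₄ - b).valIcc + (z₁ - b).valIcc by omega)
      simp only [Nat.cast_add, ZMod.natCast_valIcc] at this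
      linear_combination this
    have hne : z₂ ≠ z₁ := by rintro rfl; omega
    obtain ⟨rfl, rfl⟩ := hA.2 _ h₂ _ h₁ _ h₄ _ h₃ hz hne
    exact ⟨rfl, rfl⟩

theorem Fin.val_add_one_mod {n : ℕ} (w : Fin n) :
    (w.val + 1) % n = w.val + 1 ∧ w.val + 1 < n ∨ (w.val + 1) % n = 0 ∧ w.val + 1 = n := by
  rcases (Nat.succ_le_of_lt w.isLt).eq_or_lt with h | h
  · exact Or.inr ⟨Nat.mod_eq_zero_of_dvd ⟨1, by rw [mul_one]; exact h⟩, h⟩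
  · exact Or.inl ⟨Nat.mod_eq_of_lt h, h⟩

open SimpleGraph

section GnS

variable {n : ℕ} {S : Finset ℕ}

theorem GnS_adj_iff_of_val_ne_zero {u v : Fin n} (hu : u.val ≠ 0) (hv : v.val ≠ 0) :
    (GnS n S).Adj u v ↔ u.val + 1 = v.val ∨ v.val + 1 = u.val := by
  simp only [GnS, fromRel_adj, ne_eq, Fin.ext_iff]
  rcases u.val_add_one_mod with hu' | hu' <;> rcases v.val_add_one_mod with hv' | hv' <;> omega

theorem GnS_adj_iff_of_val_eq_zero (h2 : 2 ∈ S) (hn : n ∈ S) {u v : Fin n} (hu : u.val = 0) :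
    (GnS n S).Adj u v ↔ v.val ≠ 0 ∧ v.val + 1 ∈ S := by
  simp only [GnS, fromRel_adj, ne_eq, Fin.ext_iff, hu, zero_add]
  constructor
  · rintro ⟨hne, (h | ⟨-, h⟩) | (h | ⟨h, -⟩)⟩
    · refine ⟨Ne.symm hne, ?_⟩
      rwa [← h, Nat.mod_eq_of_lt (by have := v.isLt; omega)]
    · exact ⟨Ne.symm hne, h⟩
    · rcases v.val_add_one_mod with ⟨h', -⟩ | ⟨-, h'⟩
      · omega
      · exact ⟨Ne.symm hne, by rw [h']; exact hn⟩
    · exact absurd h (Ne.symm hne)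
  · rintro ⟨hv, hvS⟩
    exact ⟨Ne.symm hv, Or.inl (Or.inr ⟨trivial, hvS⟩)⟩

theorem GnS_exists_mem_support_val_eq {x y : Fin n} (w : (GnS n S).Walk x y)
    (h0 : ∀ v ∈ w.support, v.val ≠ 0) {t : ℕ} (ht : t ∈ Set.uIcc x.val y.val) :
    ∃ v ∈ w.support, v.val = t := by
  induction w with
  | nil => exact ⟨_, List.mem_singleton_self _, by simp_all⟩
  | @cons a b c h w ih =>
    rw [Walk.support_cons] at h0 ⊢
    have hab := (GnS_adj_iff_of_val_ne_zero (h0 a List.mem_cons_self)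
      (h0 b (List.mem_cons_of_mem _ w.start_mem_support))).mp h
    by_cases hta : t = a.val
    · exact ⟨a, List.mem_cons_self, hta.symm⟩
    obtain ⟨v, hv, rfl⟩ := ih (fun v hv => h0 v (List.mem_cons_of_mem _ hv))
      (by rw [Set.mem_uIcc] at ht ⊢; omega)
    exact ⟨v, List.mem_cons_of_mem _ hv, rfl⟩

variable (n) in
def intervalEdges (a b : ℕ) : Set (Sym2 (Fin n)) :=
  {e | ∃ u v : Fin n, u.val + 1 = v.val ∧ a ≤ u.val ∧ v.val ≤ b ∧ e = s(u, v)}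

theorem intervalEdges_eq_insert {u v : Fin n} (huv : u.val + 1 = v.val) {b : ℕ}
    (hvb : v.val ≤ b) : intervalEdges n u.val b = insert s(u, v) (intervalEdges n v.val b) := by
  ext e
  simp only [intervalEdges, Set.mem_insert_iff, Set.mem_ofPred_eq]
  constructor
  · rintro ⟨u', v', h, hu', hv', rfl⟩
    rcases hu'.eq_or_lt with hu' | hu'
    · left
      rw [Fin.ext (a := u') hu'.symm, Fin.ext (a := v') (by omega : v'.val = v.val)]
    · exact Or.inr ⟨u', v', h, by omega, hv', rfl⟩
  · rintro (rfl | ⟨u', v', h, hu', hv', rfl⟩)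
    · exact ⟨u, v, huv, le_rfl, hvb, rfl⟩
    · exact ⟨u', v', h, by omega, hv', rfl⟩

theorem GnS_isPath_length_edges {x y : Fin n} (w : (GnS n S).Walk x y) (hw : w.IsPath)
    (h0 : ∀ v ∈ w.support, v.val ≠ 0) (hxy : x.val ≤ y.val) :
    w.length = y.val - x.val ∧ {e | e ∈ w.edges} = intervalEdges n x.val y.val := by
  induction w with
  | nil =>
    refine ⟨by simp, Set.ext fun e => ?_⟩
    simp only [Walk.edges_nil, List.not_mem_nil, Set.ofPred_false, Set.mem_empty_iff_false,
      intervalEdges, Set.mem_ofPred_eq, false_iff]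
    omega
  | @cons a b c h w ih =>
    rw [Walk.cons_isPath_iff] at hw
    rw [Walk.support_cons] at h0
    have hw0 : ∀ v ∈ w.support, v.val ≠ 0 := fun v hv => h0 v (List.mem_cons_of_mem _ hv)
    have hac : a.val ≠ c.val := fun hac => hw.2 (Fin.ext hac ▸ w.end_mem_support)
    -- a step down from `a` would force the rest of the path, which ends above `a`, to revisit `a`
    have hab : a.val + 1 = b.val := by
      refine ((GnS_adj_iff_of_val_ne_zero (h0 a List.mem_cons_self) (hw0 b w.start_mem_support)).mp
        h).resolve_right fun hba => ?_
      obtain ⟨v, hv, hva⟩ := GnS_exists_mem_support_val_eq w hw0 (t := a.val)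
        (by rw [Set.mem_uIcc]; omega)
      exact hw.2 (Fin.ext hva ▸ hv)
    have hbc : b.val ≤ c.val := by omega
    obtain ⟨hlen, hedges⟩ := ih hw.1 hw0 hbc
    refine ⟨by rw [Walk.length_cons, hlen]; omega, ?_⟩
    rw [intervalEdges_eq_insert hab hbc, ← hedges]
    ext e
    simp [Walk.edges_cons]

theorem GnS_isCycle_exists_val_eq_zero {u : Fin n} {p : (GnS n S).Walk u u} (hp : p.IsCycle) :
    ∃ z ∈ p.support, z.val = 0 := by
  by_contra! h0
  cases p with
  | nil => exact hp.ne_nil rfl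
  | @cons _ z _ h w =>
    rw [Walk.cons_isCycle_iff] at hp
    rw [Walk.support_cons] at h0
    have hw0 : ∀ v ∈ w.support, v.val ≠ 0 := fun v hv => h0 v (List.mem_cons_of_mem _ hv)
    apply hp.2
    rcases (GnS_adj_iff_of_val_ne_zero (h0 u List.mem_cons_self) (hw0 z w.start_mem_support)).mp h
      with huz | hzu
    · have hedges := (GnS_isPath_length_edges w.reverse hp.1.reverse
        (by simpa only [Walk.support_reverse, List.mem_reverse] using hw0) (by omega)).2
      have : s(u, z) ∈ {e | e ∈ w.reverse.edges} := hedges ▸ ⟨u, z, huz, le_rfl, le_rfl, rfl⟩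
      simpa only [Walk.edges_reverse, List.mem_reverse, Set.mem_ofPred_eq] using this
    · have hedges := (GnS_isPath_length_edges w hp.1 hw0 (by omega)).2
      have : s(z, u) ∈ {e | e ∈ w.edges} := hedges ▸ ⟨z, u, hzu, le_rfl, le_rfl, rfl⟩
      rwa [Sym2.eq_swap] at this

theorem GnS_isCycle_edges_of_val_eq_zero (h2 : 2 ∈ S) (hn : n ∈ S) {z : Fin n} (hz : z.val = 0)
    {p : (GnS n S).Walk z z} (hp : p.IsCycle) :
    ∃ x y : Fin n, x.val < y.val ∧ x.val + 1 ∈ S ∧ y.val + 1 ∈ S ∧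
      p.length = y.val - x.val + 2 ∧
      {e | e ∈ p.edges} = {s(z, x), s(z, y)} ∪ intervalEdges n x.val y.val := by
  cases p with
  | nil => exact absurd rfl hp.ne_nil
  | @cons _ x _ hx p =>
    rw [Walk.cons_isCycle_iff] at hp
    obtain ⟨y, hy, w, hw⟩ := Walk.not_nil_iff.mp (Walk.not_nil_of_ne hx.ne (p := p.reverse))
    have hpath := hp.1.reverse
    rw [hw, Walk.cons_isPath_iff] at hpath
    have hw0 : ∀ v ∈ w.support, v.val ≠ 0 := fun v hv hv0 =>
      hpath.2 (Fin.ext (hv0.trans hz.symm) ▸ hv)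
    obtain ⟨-, hxS⟩ := (GnS_adj_iff_of_val_eq_zero h2 hn hz).mp hx
    obtain ⟨-, hyS⟩ := (GnS_adj_iff_of_val_eq_zero h2 hn hz).mp hy
    have hmem : ∀ e, e ∈ p.edges ↔ e = s(z, y) ∨ e ∈ w.edges := fun e => by
      rw [← List.mem_reverse, ← Walk.edges_reverse, hw, Walk.edges_cons, List.mem_cons]
    have hlen : (Walk.cons hx p).length = w.length + 2 := by
      rw [Walk.length_cons, ← Walk.length_reverse, hw, Walk.length_cons]
    have hedges :
        {e | e ∈ (Walk.cons hx p).edges} = {s(z, x), s(z, y)} ∪ {e | e ∈ w.edges} := by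
      ext e
      simp only [Walk.edges_cons, List.mem_cons, hmem, Set.mem_ofPred_eq, Set.mem_union,
        Set.mem_insert_iff, Set.mem_singleton_iff, or_assoc]
    have hxy : x.val ≠ y.val := fun hxy => hp.2 ((hmem _).mpr (Or.inl (by rw [Fin.ext hxy])))
    rcases Nat.lt_or_gt_of_ne hxy with hxy | hxy
    · obtain ⟨hwlen, hwedges⟩ := GnS_isPath_length_edges w.reverse hpath.1.reverse
        (by simpa only [Walk.support_reverse, List.mem_reverse] using hw0) hxy.le
      refine ⟨x, y, hxy, hxS, hyS, by rw [hlen, ← Walk.length_reverse, hwlen], ?_⟩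
      rw [hedges, ← hwedges]
      simp only [Walk.edges_reverse, List.mem_reverse]
    · obtain ⟨hwlen, hwedges⟩ := GnS_isPath_length_edges w hpath.1 hw0 hxy.le
      refine ⟨y, x, hxy, hyS, hxS, by rw [hlen, hwlen], ?_⟩
      rw [hedges, ← hwedges, Set.pair_comm]

theorem GnS_isCycle_edges (h2 : 2 ∈ S) (hn : n ∈ S) {u : Fin n} {p : (GnS n S).Walk u u}
    (hp : p.IsCycle) :
    ∃ z x y : Fin n, z.val = 0 ∧ x.val < y.val ∧ x.val + 1 ∈ S ∧ y.val + 1 ∈ S ∧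
      p.length = y.val - x.val + 2 ∧
      {e | e ∈ p.edges} = {s(z, x), s(z, y)} ∪ intervalEdges n x.val y.val := by
  obtain ⟨z, hzp, hz⟩ := GnS_isCycle_exists_val_eq_zero hp
  obtain ⟨x, y, hxy, hxS, hyS, hlen, hedges⟩ :=
    GnS_isCycle_edges_of_val_eq_zero h2 hn hz (hp.rotate hzp)
  refine ⟨z, x, y, hz, hxy, hxS, hyS, by rwa [Walk.length_rotate] at hlen, ?_⟩
  rw [← hedges]
  ext e
  exact (p.rotate_edges z hzp).mem_iff.symm

theorem GnS_noRepeatedCycleLength (h2 : 2 ∈ S) (hn : n ∈ S) (hS : HasDistinctDifferences S) :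
    NoRepeatedCycleLength (GnS n S) := by
  intro u v p q hp hq hlen
  obtain ⟨z, x, y, hz, hxy, hxS, hyS, hplen, hpedges⟩ := GnS_isCycle_edges h2 hn hp
  obtain ⟨z', x', y', hz', hxy', hxS', hyS', hqlen, hqedges⟩ := GnS_isCycle_edges h2 hn hq
  obtain ⟨hx, hy⟩ := hS _ hxS _ hyS _ hxS' _ hyS' (by omega) (by omega) (by omega)
  rw [hpedges, hqedges, Fin.ext (hz.trans hz'.symm), Fin.ext (by omega : x.val = x'.val),
    Fin.ext (by omega : y.val = y'.val)]

theorem cycleGraph_adj_iff_val (hn : 2 ≤ n) {u v : Fin n} :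
    (cycleGraph n).Adj u v ↔ u ≠ v ∧ ((u.val + 1) % n = v.val ∨ (v.val + 1) % n = u.val) := by
  obtain ⟨m, rfl⟩ : ∃ m, n = m + 2 := ⟨n - 2, by omega⟩
  simp only [cycleGraph_adj, sub_eq_iff_eq_add', Fin.ext_iff, Fin.val_add, Fin.val_one, ne_eq]
  rcases u.val_add_one_mod with hu | hu <;> rcases v.val_add_one_mod with hv | hv <;> omega

theorem GnS_adj_iff (hn : 2 ≤ n) {u v : Fin n} :
    (GnS n S).Adj u v ↔ (cycleGraph n).Adj u v ∨
      u ≠ v ∧ (u.val = 0 ∧ v.val + 1 ∈ S ∨ v.val = 0 ∧ u.val + 1 ∈ S) := by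
  rw [cycleGraph_adj_iff_val hn]
  simp only [GnS, fromRel_adj]
  tauto

theorem cycleGraph_le_GnS (hn : 2 ≤ n) : cycleGraph n ≤ GnS n S :=
  fun _ _ h => (GnS_adj_iff hn).mpr (Or.inl h)

theorem GnS_isHamiltonianGraph (hn : 3 ≤ n) : IsHamiltonianGraph (GnS n S) := by
  obtain ⟨m, rfl⟩ : ∃ m, n = m + 3 := ⟨n - 3, by omega⟩
  refine ⟨0, (cycleGraph.cycle m).mapLe (cycleGraph_le_GnS (by omega)),
    cycleGraph.isCycle_cycle.mapLe _, ?_⟩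
  rw [Walk.length_mapLe, cycleGraph.length_cycle, Fintype.card_fin]

theorem ncard_edgeSet_cycleGraph (m : ℕ) : (cycleGraph (m + 3)).edgeSet.ncard = m + 3 := by
  rw [← coe_edgeFinset, Set.ncard_coe_finset]
  have := sum_degrees_eq_twice_card_edges (cycleGraph (m + 3))
  simp only [cycleGraph_degree_three_le, Finset.sum_const, Finset.card_univ, Fintype.card_fin,
    smul_eq_mul] at this
  omega

theorem ncard_incidenceSet_cycleGraph {m : ℕ} (v : Fin (m + 3)) :
    ((cycleGraph (m + 3)).incidenceSet v).ncard = 2 := by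
  rw [Set.ncard_eq_toFinset_card', ← cycleGraph_degree_three_le (v := v),
    ← card_incidenceSet_eq_degree, Set.toFinset_card]

section NeZero

variable [NeZero n]

variable (n S) in
def chordEdges : Set (Sym2 (Fin n)) :=
  (fun v => s(0, v)) '' {v | v.val + 1 ∈ S}

theorem GnS_edgeSet (hn : 2 ≤ n) (hS : ∀ a ∈ S, 2 ≤ a) :
    (GnS n S).edgeSet = (cycleGraph n).edgeSet ∪ chordEdges n S := by
  ext e
  induction e using Sym2.ind with
  | h u v =>
    simp only [mem_edgeSet, GnS_adj_iff hn, chordEdges, Set.mem_union, Set.mem_image,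
      Set.mem_ofPred_eq, Sym2.eq_iff, Fin.ext_iff, Fin.val_zero]
    refine or_congr_right ⟨?_, ?_⟩
    · rintro ⟨-, ⟨hu, hv⟩ | ⟨hv, hu⟩⟩
      · exact ⟨v, hv, Or.inl ⟨hu.symm, rfl⟩⟩
      · exact ⟨u, hu, Or.inr ⟨hv.symm, rfl⟩⟩
    · rintro ⟨x, hx, ⟨hu, hxv⟩ | ⟨hv, hxu⟩⟩ <;> have := hS _ hx
      · exact ⟨fun h => by rw [h] at hu; omega, Or.inl ⟨hu.symm, hxv ▸ hx⟩⟩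
      · exact ⟨fun h => by rw [h] at hxu; omega, Or.inr ⟨hv.symm, hxu ▸ hx⟩⟩

theorem ncard_chordEdges (hS : ∀ a ∈ S, 1 ≤ a ∧ a ≤ n) : (chordEdges n S).ncard = #S := by
  rw [chordEdges, Set.ncard_image_of_injective _ fun _ _ => Sym2.congr_right.mp,
    ← Set.ncard_coe_finset,
    ← Set.ncard_image_of_injective _ ((add_left_injective 1).comp Fin.val_injective)]
  congr 1
  ext a
  simp only [Set.mem_image, Set.mem_ofPred_eq, Function.comp_apply, Finset.mem_coe]
  refine ⟨by rintro ⟨v, hv, rfl⟩; exact hv, fun ha => ?_⟩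
  have := hS a ha
  exact ⟨⟨a - 1, by omega⟩, by simpa [show a - 1 + 1 = a by omega] using ha, by simp; omega⟩

theorem cycleGraph_edgeSet_inter_chordEdges (hn : 3 ≤ n) (h2 : 2 ∈ S) (hnS : n ∈ S) :
    (cycleGraph n).edgeSet ∩ chordEdges n S = (cycleGraph n).incidenceSet 0 := by
  have hnbr : ∀ w : Fin n, (cycleGraph n).Adj 0 w → w.val + 1 ∈ S := fun w hw => by
    rw [cycleGraph_adj_iff_val (by omega), Fin.val_zero, zero_add,
      Nat.mod_eq_of_lt (by omega : 1 < n)] at hw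
    rcases w.val_add_one_mod with h | h
    · rwa [show w.val = 1 by omega]
    · rwa [h.2]
  ext e
  induction e using Sym2.ind with
  | h u v =>
    simp only [chordEdges, incidenceSet, Set.mem_inter_iff, Set.mem_image, Set.mem_ofPred_eq,
      Sym2.mem_iff]
    refine and_congr_right fun huv =>
      ⟨fun ⟨x, _, hx⟩ => Sym2.mem_iff.mp (hx ▸ Sym2.mem_mk_left 0 x), ?_⟩
    rintro (rfl | rfl)
    · exact ⟨v, hnbr v huv, rfl⟩
    · exact ⟨u, hnbr u huv.symm, Sym2.eq_swap⟩

end NeZero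

theorem GnS_ncard_edgeSet (hn : 3 ≤ n) (hS : ∀ a ∈ S, 2 ≤ a ∧ a ≤ n) (h2 : 2 ∈ S)
    (hnS : n ∈ S) : (GnS n S).edgeSet.ncard = n + #S - 2 := by
  obtain ⟨m, rfl⟩ : ∃ m, n = m + 3 := ⟨n - 3, by omega⟩
  have := Set.ncard_union_add_ncard_inter (cycleGraph (m + 3)).edgeSet (chordEdges _ S)
  rw [← GnS_edgeSet (by omega) fun a ha => (hS a ha).1,
    cycleGraph_edgeSet_inter_chordEdges hn h2 hnS, ncard_incidenceSet_cycleGraph,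
    ncard_edgeSet_cycleGraph, ncard_chordEdges fun a ha => ⟨by linarith [(hS a ha).1], (hS a ha).2⟩]
    at this
  omega

end GnS

theorem exists_hasDistinctDifferences_of_isPrimePow {q : ℕ} (hq : IsPrimePow q) :
    ∃ S : Finset ℕ, #S = q + 1 ∧ (∀ a ∈ S, 2 ≤ a ∧ a ≤ q ^ 2 + q + 1) ∧ 2 ∈ S ∧
      q ^ 2 + q + 1 ∈ S ∧ HasDistinctDifferences S := by
  have hq2 := hq.two_le
  obtain ⟨p, k, hp, hk, rfl⟩ := hq
  have : Fact p.Prime := ⟨hp.nat_prime⟩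
  obtain ⟨A, hA⟩ := exists_perfectDifferenceSet_zmod
    (FiniteField.finrank_extension (GaloisField p k) p 3) (GaloisField.card p k hk.ne')
  have hAcard := hA.card_mul_card_sub_card
  rw [ZMod.card, Nat.add_sub_cancel] at hAcard
  have hA' : #A * #A = (p ^ k) ^ 2 + p ^ k + #A := by
    have := Nat.sub_add_cancel (Nat.le_mul_self #A)
    omega
  obtain ⟨S, hS, hSA⟩ := hA.exists_hasDistinctDifferences (by nlinarith)
  refine ⟨S, ?_, hSA⟩
  rw [hS]
  apply le_antisymm <;> nlinarith

/-- For every prime power `q`, there is a Hamiltonian graph on `q^2 + q + 1` vertices with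
exactly `q^2 + 2q` edges in which no two cycles have the same length. -/
theorem stmt2 (q : ℕ) (hq : IsPrimePow q) :
    ∃ G : SimpleGraph (Fin (q ^ 2 + q + 1)),
      G.edgeSet.ncard = q ^ 2 + 2 * q ∧ IsHamiltonianGraph G ∧ NoRepeatedCycleLength G := by
  obtain ⟨S, hcard, hbound, h2, hn, hS⟩ := exists_hasDistinctDifferences_of_isPrimePow hq
  have hn3 : 3 ≤ q ^ 2 + q + 1 := by nlinarith [hq.two_le]
  refine ⟨GnS _ S, ?_, GnS_isHamiltonianGraph hn3, GnS_noRepeatedCycleLength h2 hn hS⟩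
  rw [GnS_ncard_edgeSet hn3 hbound h2 hn, hcard]
  omega
end

section
/- If n ≥ 4 and S ⊆ {3,4,...,n-1} is a distinct cycle set, then the graph G_n(S) has exactly n + |S| edges and no two cycles in G_n(S) have the same length. -/
/-- `S` is a distinct cycle set (for a given `n`): (1) the differences `b - a` with
`a < b` in `S` are pairwise distinct, and (2) the three sets `S`,
`S_n^* = {n + 2 - a : a ∈ S}` and `S^- = {b - a + 2 : a, b ∈ S, b > a}`
are pairwise disjoint. -/
def DistinctCycleSet (n : ℕ) (S : Finset ℕ) : Prop :=
  (∀ a ∈ S, ∀ b ∈ S, ∀ c ∈ S, ∀ d ∈ S, a < b → c < d → b - a = d - c → a = c ∧ b = d) ∧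
  (∀ a ∈ S, ∀ b ∈ S, a ≠ n + 2 - b) ∧
  (∀ a ∈ S, ∀ b ∈ S, ∀ c ∈ S, b < c → a ≠ c - b + 2) ∧
  (∀ a ∈ S, ∀ b ∈ S, ∀ c ∈ S, b < c → n + 2 - a ≠ c - b + 2)


/-!
Deleting the integer vertex `1` (label `0`) from `G_n(S)` leaves the path `2 - 3 - ⋯ - n`, which
is acyclic. Hence every cycle passes through `1`, leaves it along two spokes `1 - x`, `1 - y` with
`x < y` and returns along the unique path between them: its edges are determined by `{x, y}` and
its length is `y - x + 2`. The spoke endpoints form `{2, n} ∪ S`, and the distinct cycle set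
condition says precisely that the differences `y - x` of such pairs are pairwise distinct.
-/

open SimpleGraph

theorem Nat.add_one_mod_eq_iff {i j n : ℕ} (hi : i < n) (hj : j < n) :
    (i + 1) % n = j ↔ i + 1 = j ∨ i + 1 = n ∧ j = 0 := by
  rcases Nat.lt_or_ge (i + 1) n with h | h
  · rw [Nat.mod_eq_of_lt h]; omega
  · rw [show i + 1 = n by omega, Nat.mod_self]; omega

theorem Fin.val_add_one_cases {n : ℕ} [NeZero n] (i : Fin n) :
    i.val + 1 = (i + 1).val ∨ i.val + 1 = n ∧ (i + 1).val = 0 :=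
  (Nat.add_one_mod_eq_iff i.isLt (i + 1).isLt).mp (by simp [Fin.val_add])

namespace SimpleGraph

variable {n : ℕ}

theorem pathGraph_mem_support_of_le_of_le {a b : Fin n} (p : (pathGraph n).Walk a b) {k : Fin n}
    (hak : a ≤ k) (hkb : k ≤ b) : k ∈ p.support := by
  induction p with
  | nil => simp [le_antisymm hkb hak]
  | @cons a c b h p ih =>
    rcases eq_or_lt_of_le hak with rfl | hak
    · exact p.support.mem_cons_self
    · rw [pathGraph_adj] at h
      exact List.mem_cons_of_mem _ (ih (by omega) hkb)

theorem pathGraph_support_map_val_of_isPath {a b : Fin n} {p : (pathGraph n).Walk a b}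
    (hp : p.IsPath) (hab : a ≤ b) : p.support.map Fin.val = List.range' a (b + 1 - a) := by
  induction p with
  | nil => simp
  | @cons a c b h p ih =>
    rw [Walk.cons_isPath_iff] at hp
    have hac : a ≤ c := le_of_not_gt fun hca ↦
      hp.2 (pathGraph_mem_support_of_le_of_le p hca.le hab)
    have hab' : a ≠ b := fun hab ↦ hp.2 (hab ▸ p.end_mem_support)
    rw [pathGraph_adj] at h
    rw [Walk.support_cons, List.map_cons, ih hp.1 (by omega),
      show b.val + 1 - a = (b.val + 1 - c) + 1 by omega, List.range'_succ]
    congr 2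
    omega

theorem pathGraph_length_of_isPath {a b : Fin n} {p : (pathGraph n).Walk a b} (hp : p.IsPath)
    (hab : a ≤ b) : p.length = b - a := by
  have := congrArg List.length (pathGraph_support_map_val_of_isPath hp hab)
  rw [List.length_map, Walk.length_support, List.length_range'] at this
  omega

theorem pathGraph_walk_eq_of_isPath {a b : Fin n} {p q : (pathGraph n).Walk a b}
    (hp : p.IsPath) (hq : q.IsPath) : p = q := by
  wlog hab : a ≤ b generalizing a b
  · exact Walk.reverse_injective (this hp.reverse hq.reverse (le_of_not_ge hab))
  exact Walk.ext_support <| List.map_injective_iff.mpr Fin.val_injective <|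
    (pathGraph_support_map_val_of_isPath hp hab).trans
      (pathGraph_support_map_val_of_isPath hq hab).symm

theorem isAcyclic_pathGraph : (pathGraph n).IsAcyclic :=
  isAcyclic_iff_subsingleton_path.mpr fun _ _ ↦
    ⟨fun p q ↦ Subtype.ext (pathGraph_walk_eq_of_isPath p.2 q.2)⟩

theorem Walk.IsCycle.exists_eq_cons_concat {V : Type*} {G : SimpleGraph V} {v : V}
    {c : G.Walk v v} (hc : c.IsCycle) :
    ∃ (x y : V) (hx : G.Adj v x) (hy : G.Adj y v) (r : G.Walk x y),
      r.IsPath ∧ v ∉ r.support ∧ c = cons hx (r.concat hy) := by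
  cases c with
  | nil => exact absurd hc Walk.not_isCycle_nil
  | @cons _ x _ hx q =>
    have hq : ¬ q.Nil := Walk.not_nil_of_ne (G.ne_of_adj hx).symm
    have hqpath := ((Walk.cons_isCycle_iff q hx).mp hc).1
    rw [← Walk.concat_dropLast (q.adj_penultimate hq), Walk.concat_isPath_iff] at hqpath
    exact ⟨x, _, hx, q.adj_penultimate hq, q.dropLast, hqpath.1, hqpath.2,
      by rw [Walk.concat_dropLast]⟩

end SimpleGraph

/-- The spoke pairs `(2, b)`, `(a, n)`, `(a, b)` and `(2, n)` close cycles whose lengths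
`b - a + 2` lie in `S`, `S_n^*`, `S^-` and `{n}` respectively. -/
theorem DistinctCycleSet.eq_of_sub_eq {n : ℕ} {S : Finset ℕ} (hD : DistinctCycleSet n S)
    (hS : S ⊆ Finset.Icc 3 (n - 1)) {a b c d : ℕ} (ha : a = 2 ∨ a = n ∨ a ∈ S)
    (hb : b = 2 ∨ b = n ∨ b ∈ S) (hc : c = 2 ∨ c = n ∨ c ∈ S) (hd : d = 2 ∨ d = n ∨ d ∈ S)
    (hab : a < b) (hcd : c < d) (h : b - a = d - c) : a = c ∧ b = d := by
  obtain ⟨hsub, hS_Sstar, hS_Sminus, hSstar_Sminus⟩ := hD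
  have bounds {x : ℕ} (hx : x = 2 ∨ x = n ∨ x ∈ S) :
      x = 2 ∨ x = n ∨ x ∈ S ∧ 3 ≤ x ∧ x ≤ n - 1 := by
    rcases hx with hx | hx | hx
    exacts [Or.inl hx, Or.inr (Or.inl hx), Or.inr (Or.inr ⟨hx, Finset.mem_Icc.mp (hS hx)⟩)]
  rcases bounds ha with ha' | ha' | ⟨ha, ha'⟩ <;> rcases bounds hb with hb' | hb' | ⟨hb, hb'⟩ <;>
    rcases bounds hc with hc' | hc' | ⟨hc, hc'⟩ <;> rcases bounds hd with hd' | hd' | ⟨hd, hd'⟩ <;>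
    first
    | omega
    | exact hsub a ha b hb c hc d hd hab hcd h
    | exact absurd (by omega) (hS_Sstar b hb c hc)
    | exact absurd (by omega) (hS_Sstar d hd a ha)
    | exact absurd (by omega) (hS_Sminus b hb c hc d hd hcd)
    | exact absurd (by omega) (hS_Sminus d hd a ha b hb hab)
    | exact absurd (by omega) (hSstar_Sminus a ha c hc d hd hcd)
    | exact absurd (by omega) (hSstar_Sminus c hc a ha b hb hab)

namespace GnS

def edgeOfIndex (n : ℕ) [NeZero n] (S : Finset ℕ) : Fin n ⊕ S → Sym2 (Fin n) :=
  Sum.elim (fun i ↦ s(i, i + 1)) (fun a ↦ s(0, Fin.ofNat n (a - 1)))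

variable {n : ℕ} {S : Finset ℕ}

theorem adj_iff {i j : Fin n} :
    (GnS n S).Adj i j ↔ i ≠ j ∧ (i.val + 1 = j.val ∨ j.val + 1 = i.val ∨
      (i.val + 1 = n ∧ j.val = 0) ∨ (j.val + 1 = n ∧ i.val = 0) ∨
      (i.val = 0 ∧ j.val + 1 ∈ S) ∨ (j.val = 0 ∧ i.val + 1 ∈ S)) := by
  simp only [GnS, fromRel_adj, Nat.add_one_mod_eq_iff i.isLt j.isLt,
    Nat.add_one_mod_eq_iff j.isLt i.isLt]
  tauto

variable [NeZero n]

theorem val_ofNat_sub_one_of_mem (hS : S ⊆ Finset.Icc 3 (n - 1)) {a : ℕ} (ha : a ∈ S) :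
    (Fin.ofNat n (a - 1)).val + 1 = a ∧ 3 ≤ a ∧ a ≤ n - 1 := by
  have := Finset.mem_Icc.mp (hS ha)
  rw [Fin.val_ofNat, Nat.mod_eq_of_lt (by omega)]
  omega

theorem edgeOfIndex_injective (hn : 3 ≤ n) (hS : S ⊆ Finset.Icc 3 (n - 1)) :
    (edgeOfIndex n S).Injective := by
  rintro (i | ⟨a, ha⟩) (j | ⟨b, hb⟩) h <;>
    simp only [edgeOfIndex, Sum.elim_inl, Sum.elim_inr, Sym2.eq_iff, Fin.ext_iff,
      Fin.val_zero, Sum.inl.injEq, Sum.inr.injEq, Subtype.mk.injEq, reduceCtorEq] at h ⊢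
  · have := i.val_add_one_cases; have := j.val_add_one_cases; omega
  · have := i.val_add_one_cases; have := val_ofNat_sub_one_of_mem hS hb; omega
  · have := j.val_add_one_cases; have := val_ofNat_sub_one_of_mem hS ha; omega
  · have := val_ofNat_sub_one_of_mem hS ha; have := val_ofNat_sub_one_of_mem hS hb; omega

theorem range_edgeOfIndex (hn : 3 ≤ n) (hS : S ⊆ Finset.Icc 3 (n - 1)) :
    Set.range (edgeOfIndex n S) = (GnS n S).edgeSet := by
  refine Set.Subset.antisymm ?_ fun e he ↦ ?_
  · rintro _ ⟨i | ⟨a, ha⟩, rfl⟩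
    · rw [edgeOfIndex, Sum.elim_inl, mem_edgeSet, GnS, fromRel_adj]
      refine ⟨fun h ↦ ?_, Or.inl (Or.inl (by simp [Fin.val_add]))⟩
      have := congrArg Fin.val h
      have := i.val_add_one_cases
      have := (i + 1).isLt
      omega
    · have hval := val_ofNat_sub_one_of_mem hS ha
      rw [edgeOfIndex, Sum.elim_inr, mem_edgeSet, GnS, fromRel_adj]
      dsimp only
      refine ⟨fun h ↦ ?_, Or.inl (Or.inr ⟨rfl, by rwa [hval.1]⟩)⟩
      have := congrArg Fin.val h
      rw [Fin.val_zero] at this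
      omega
  induction e using Sym2.ind with
  | h i j =>
  have hi := i.val_add_one_cases
  have hj := j.val_add_one_cases
  have := (i + 1).isLt
  have := (j + 1).isLt
  have hval {v : Fin n} : (Fin.ofNat n (v.val + 1 - 1)).val = v.val := by simp
  simp only [mem_edgeSet, adj_iff, ne_eq, Fin.ext_iff] at he
  simp only [Set.mem_range, Sum.exists, edgeOfIndex, Sum.elim_inl, Sum.elim_inr, Subtype.exists,
    Sym2.eq_iff, Fin.ext_iff, Fin.val_zero]
  rcases he with ⟨hij, h | h | h | h | ⟨h0, hj⟩ | ⟨h0, hi⟩⟩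
  · exact Or.inl ⟨i, Or.inl ⟨rfl, by omega⟩⟩
  · exact Or.inl ⟨j, Or.inr ⟨rfl, by omega⟩⟩
  · exact Or.inl ⟨i, Or.inl ⟨rfl, by omega⟩⟩
  · exact Or.inl ⟨j, Or.inr ⟨rfl, by omega⟩⟩
  · exact Or.inr ⟨j + 1, hj, Or.inl ⟨h0.symm, hval⟩⟩
  · exact Or.inr ⟨i + 1, hi, Or.inr ⟨h0.symm, hval⟩⟩

theorem edgeSet_ncard (hn : 3 ≤ n) (hS : S ⊆ Finset.Icc 3 (n - 1)) :
    (GnS n S).edgeSet.ncard = n + S.card := by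
  rw [← range_edgeOfIndex hn hS, Set.ncard_range_of_injective (edgeOfIndex_injective hn hS),
    Nat.card_sum, Nat.card_eq_fintype_card, Fintype.card_fin, Nat.card_eq_finsetCard]

theorem pathGraph_adj_of_adj {i j : Fin n} (h : (GnS n S).Adj i j) (hi : i ≠ 0) (hj : j ≠ 0) :
    (pathGraph n).Adj i j := by
  rw [adj_iff] at h
  rw [pathGraph_adj]
  rw [Ne, Fin.ext_iff, Fin.val_zero] at hi hj
  omega

theorem val_add_one_of_adj_zero {j : Fin n} (h : (GnS n S).Adj 0 j) :
    j.val + 1 = 2 ∨ j.val + 1 = n ∨ j.val + 1 ∈ S := by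
  rw [adj_iff, Ne, Fin.ext_iff, Fin.val_zero] at h
  obtain ⟨hne, h | h | h | h | h | h⟩ := h <;> first | omega | exact Or.inr (Or.inr h.2)

theorem edges_subset_edgeSet_pathGraph {a b : Fin n} {r : (GnS n S).Walk a b}
    (hr : 0 ∉ r.support) : ∀ e ∈ r.edges, e ∈ (pathGraph n).edgeSet := by
  intro e he
  induction e using Sym2.ind with
  | h i j =>
    exact pathGraph_adj_of_adj (r.edges_subset_edgeSet he)
      (ne_of_mem_of_not_mem (r.fst_mem_support_of_mem_edges he) hr)
      (ne_of_mem_of_not_mem (r.snd_mem_support_of_mem_edges he) hr)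

theorem zero_mem_support_of_isCycle {u : Fin n} {c : (GnS n S).Walk u u} (hc : c.IsCycle) :
    0 ∈ c.support := by
  by_contra h
  exact isAcyclic_pathGraph _ (hc.transfer (edges_subset_edgeSet_pathGraph h))

theorem walk_eq_of_isPath {a b : Fin n} {r r' : (GnS n S).Walk a b}
    (hr : r.IsPath) (hr0 : 0 ∉ r.support) (hr' : r'.IsPath) (hr0' : 0 ∉ r'.support) : r = r' :=
  Walk.ext_support <| by
    simpa using congrArg Walk.support <| pathGraph_walk_eq_of_isPath
      (hr.transfer (edges_subset_edgeSet_pathGraph hr0))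
      (hr'.transfer (edges_subset_edgeSet_pathGraph hr0'))

theorem length_of_isPath {a b : Fin n} {r : (GnS n S).Walk a b} (hr : r.IsPath)
    (hr0 : 0 ∉ r.support) (hab : a ≤ b) : r.length = b - a := by
  simpa using pathGraph_length_of_isPath (hr.transfer (edges_subset_edgeSet_pathGraph hr0)) hab

theorem exists_arc_of_isCycle {u : Fin n} {p : (GnS n S).Walk u u} (hp : p.IsCycle) :
    ∃ (x y : Fin n) (hx : (GnS n S).Adj 0 x) (hy : (GnS n S).Adj y 0) (r : (GnS n S).Walk x y),
      x < y ∧ r.IsPath ∧ 0 ∉ r.support ∧ p.length = r.length + 2 ∧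
      ∀ e, e ∈ p.edges ↔ e ∈ (Walk.cons hx (r.concat hy)).edges := by
  have h0 := zero_mem_support_of_isCycle hp
  obtain ⟨x, y, hx, hy, r, hr, hr0, hc⟩ := (hp.rotate h0).exists_eq_cons_concat
  have hpl : p.length = r.length + 2 := by
    rw [← p.length_rotate 0 h0, hc, Walk.length_cons, Walk.length_concat]
  have hpe (e) : e ∈ p.edges ↔ e ∈ (Walk.cons hx (r.concat hy)).edges := by
    rw [← hc]
    exact (p.rotate_edges 0 h0).mem_iff.symm
  rcases lt_trichotomy x y with hxy | rfl | hyx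
  · exact ⟨x, y, hx, hy, r, hxy, hr, hr0, hpl, hpe⟩
  · have := hp.three_le_length
    rw [hpl, length_of_isPath hr hr0 le_rfl] at this
    omega
  · refine ⟨y, x, hy.symm, hx.symm, r.reverse, hyx, hr.reverse, by simpa using hr0,
      by simpa using hpl, fun e ↦ ?_⟩
    simp only [hpe, Walk.edges_cons, Walk.edges_concat, Walk.edges_reverse, List.mem_cons,
      List.concat_eq_append, List.mem_append, List.mem_reverse,
      Sym2.eq_swap (a := x), Sym2.eq_swap (a := y)]
    tauto

end GnS

/-- If `n ≥ 4` and `S ⊆ {3, ..., n-1}` is a distinct cycle set, then `G_n(S)` has exactly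
`n + |S|` edges and no two cycles of `G_n(S)` have the same length. -/
theorem stmt3 (n : ℕ) (hn : 4 ≤ n) (S : Finset ℕ) (hS : S ⊆ Finset.Icc 3 (n - 1))
    (hdcs : DistinctCycleSet n S) :
    (GnS n S).edgeSet.ncard = n + S.card ∧ NoRepeatedCycleLength (GnS n S) := by
  have : NeZero n := ⟨by omega⟩
  refine ⟨GnS.edgeSet_ncard (by omega) hS, fun u v p q hp hq hlen ↦ ?_⟩
  obtain ⟨x, y, hx, hy, r, hxy, hr, hr0, hpl, hpe⟩ := GnS.exists_arc_of_isCycle hp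
  obtain ⟨x', y', hx', hy', r', hxy', hr', hr0', hql, hqe⟩ := GnS.exists_arc_of_isCycle hq
  rw [GnS.length_of_isPath hr hr0 hxy.le] at hpl
  rw [GnS.length_of_isPath hr' hr0' hxy'.le] at hql
  obtain ⟨hxx, hyy⟩ := hdcs.eq_of_sub_eq hS (GnS.val_add_one_of_adj_zero hx)
    (GnS.val_add_one_of_adj_zero hy.symm) (GnS.val_add_one_of_adj_zero hx')
    (GnS.val_add_one_of_adj_zero hy'.symm) (by omega) (by omega) (by omega)
  obtain rfl : x = x' := Fin.ext (by omega)
  obtain rfl : y = y' := Fin.ext (by omega)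
  obtain rfl := GnS.walk_eq_of_isPath hr hr0 hr' hr0'
  ext e
  exact (hpe e).trans (hqe e).symm
end

section
/- If n ≥ 4 and A ⊆ Z_n is a perfect difference set, then there exists a distinct cycle set S ⊆ {3,4,...,n-1} with |S| ≥ |A| - 2. -/
/-- `A ⊆ ℤ/nℤ` is a perfect difference set: every nonzero residue has exactly one
representation as a difference `a - b` of two elements of `A`. -/
def PerfectDifferenceSet {n : ℕ} (A : Finset (ZMod n)) : Prop :=
  ∀ d : ZMod n, d ≠ 0 → ∃! p : ZMod n × ZMod n, p.1 ∈ A ∧ p.2 ∈ A ∧ p.1 - p.2 = d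

/-- If `n ≥ 4` and `A ⊆ ℤ/nℤ` is a perfect difference set, then there is a distinct cycle
set `S ⊆ {3, ..., n-1}` with `|S| ≥ |A| - 2`. -/
theorem stmt4 (n : ℕ) (hn : 4 ≤ n) (A : Finset (ZMod n)) (hA : PerfectDifferenceSet A) :
    ∃ S : Finset ℕ, S ⊆ Finset.Icc 3 (n - 1) ∧ DistinctCycleSet n S ∧
      (A.card : ℤ) - 2 ≤ (S.card : ℤ) := by
  haveI : NeZero n := ⟨by omega⟩
  by_cases hcard : A.card ≤ 2
  · refine ⟨∅, by simp, ⟨by simp, by simp, by simp, by simp⟩, ?_⟩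
    simp only [Finset.card_empty, Nat.cast_zero]
    omega
  push_neg at hcard
  -- basic val facts
  have v2 : (2 : ZMod n).val = 2 := by
    have := ZMod.val_cast_of_lt (show 2 < n by omega)
    simpa using this
  have v1 : (1 : ZMod n).val = 1 := by
    have := ZMod.val_cast_of_lt (show 1 < n by omega)
    simpa using this
  have h2ne : (2 : ZMod n) ≠ 0 := by
    intro h; rw [h, ZMod.val_zero] at v2; omega
  obtain ⟨⟨p, q⟩, ⟨hp, hq, hpq⟩, -⟩ := hA 2 h2ne
  set A' : Finset (ZMod n) := A.image (· - q) with hA'def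
  have mem_A' : ∀ x : ZMod n, x ∈ A' ↔ x + q ∈ A := by
    intro x
    simp only [hA'def, Finset.mem_image]
    constructor
    · rintro ⟨a, ha, rfl⟩; simpa using ha
    · intro h; exact ⟨x + q, h, by ring⟩
  have key : ∀ x y z w : ZMod n, x ∈ A' → y ∈ A' → z ∈ A' → w ∈ A' →
      x - y = z - w → x - y ≠ 0 → x = z ∧ y = w := by
    intro x y z w hx hy hz hw heq hne
    obtain ⟨u, -, hu⟩ := hA (x - y) hne
    have h1 := hu (x + q, y + q) ⟨(mem_A' x).1 hx, (mem_A' y).1 hy, by ring⟩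
    have h2 := hu (z + q, w + q) ⟨(mem_A' z).1 hz, (mem_A' w).1 hw, by
      show z + q - (w + q) = x - y
      rw [heq]; ring⟩
    have h3 : (x + q, y + q) = (z + q, w + q) := h1.trans h2.symm
    rw [Prod.ext_iff] at h3
    exact ⟨by have := h3.1; simpa using add_right_cancel this,
      by have := h3.2; simpa using add_right_cancel this⟩
  have h0A' : (0 : ZMod n) ∈ A' := (mem_A' 0).2 (by simpa using hq)
  have h2A' : (2 : ZMod n) ∈ A' := (mem_A' 2).2 (by
    have : p = 2 + q := by rw [← hpq]; ring
    rwa [← this])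
  have h1ne : (1 : ZMod n) ≠ 0 := by
    intro h; rw [h, ZMod.val_zero] at v1; omega
  have h1A' : (1 : ZMod n) ∉ A' := by
    intro h1A'
    have hk := key 1 0 2 1 h1A' h0A' h2A' h1A' (by ring) (by simpa using h1ne)
    exact h1ne (by linear_combination -hk.1)
  -- the cycle set
  set T : Finset (ZMod n) := (A'.erase 0).erase 2 with hTdef
  set S : Finset ℕ := T.image ZMod.val with hSdef
  have hmemT : ∀ a ∈ T, a ∈ A' ∧ 3 ≤ a.val ∧ a.val ≤ n - 1 := by
    intro a ha
    rw [hTdef, Finset.mem_erase, Finset.mem_erase] at ha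
    obtain ⟨ha2, ha0, haA⟩ := ha
    refine ⟨haA, ?_, ?_⟩
    · have hv0 : a.val ≠ 0 := by
        intro h
        exact ha0 (by rw [← ZMod.natCast_rightInverse a, h]; simp)
      have hv1 : a.val ≠ 1 := by
        intro h
        apply h1A'
        have : a = 1 := by rw [← ZMod.natCast_rightInverse a, h]; simp
        rwa [← this]
      have hv2 : a.val ≠ 2 := by
        intro h
        exact ha2 (by rw [← ZMod.natCast_rightInverse a, h]; simp)
      omega
    · have := ZMod.val_lt a; omega
  have hmemS : ∀ x ∈ S, 3 ≤ x ∧ x ≤ n - 1 ∧ (x : ZMod n) ∈ A' := by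
    intro x hx
    rw [hSdef, Finset.mem_image] at hx
    obtain ⟨a, ha, rfl⟩ := hx
    obtain ⟨h1, h2, h3⟩ := hmemT a ha
    exact ⟨h2, h3, by rw [ZMod.natCast_rightInverse a]; exact h1⟩
  have hvcast : ∀ x ∈ S, ((x : ZMod n)).val = x := by
    intro x hx
    obtain ⟨h1, h2, -⟩ := hmemS x hx
    exact ZMod.val_cast_of_lt (by omega)
  refine ⟨S, ?_, ⟨?_, ?_, ?_, ?_⟩, ?_⟩
  · intro x hx
    obtain ⟨h1, h2, -⟩ := hmemS x hx
    exact Finset.mem_Icc.2 ⟨h1, h2⟩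
  · -- distinct differences
    intro a ha b hb c hc d hd hab hcd heq
    obtain ⟨ha3, han, haA⟩ := hmemS a ha
    obtain ⟨hb3, hbn, hbA⟩ := hmemS b hb
    obtain ⟨hc3, hcn, hcA⟩ := hmemS c hc
    obtain ⟨hd3, hdn, hdA⟩ := hmemS d hd
    have e1 : (b : ZMod n) - a = ((b - a : ℕ) : ZMod n) := by
      have h := congrArg (Nat.cast : ℕ → ZMod n) (show a + (b - a) = b by omega)
      push_cast at h
      linear_combination -h
    have e2 : (d : ZMod n) - c = ((d - c : ℕ) : ZMod n) := by
      have h := congrArg (Nat.cast : ℕ → ZMod n) (show c + (d - c) = d by omega)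
      push_cast at h
      linear_combination -h
    have hne : (b : ZMod n) - a ≠ 0 := by
      rw [e1]
      intro h
      have := ZMod.val_cast_of_lt (show b - a < n by omega)
      rw [h, ZMod.val_zero] at this
      omega
    have hk := key _ _ _ _ hbA haA hdA hcA (by rw [e1, e2, heq]) hne
    constructor
    · have := congrArg ZMod.val hk.2
      rwa [hvcast a ha, hvcast c hc] at this
    · have := congrArg ZMod.val hk.1
      rwa [hvcast b hb, hvcast d hd] at this
  · -- S vs S*
    intro a ha b hb hcontra
    obtain ⟨ha3, han, haA⟩ := hmemS a ha
    obtain ⟨hb3, hbn, hbA⟩ := hmemS b hb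
    have hnat : a + b = n + 2 := by omega
    have hz : (a : ZMod n) + b = 2 := by
      have := congrArg (Nat.cast : ℕ → ZMod n) hnat
      push_cast at this
      rwa [ZMod.natCast_self, zero_add] at this
    have hane2 : (a : ZMod n) - 2 ≠ 0 := by
      intro h
      have : (a : ZMod n) = 2 := by linear_combination h
      have := congrArg ZMod.val this
      rw [hvcast a ha, v2] at this
      omega
    have hk := key _ _ _ _ haA h2A' h0A' hbA (by linear_combination hz) hane2
    have := congrArg ZMod.val hk.1
    rw [hvcast a ha, ZMod.val_zero] at this
    omega
  · -- S vs S⁻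
    intro a ha b hb c hc hbc hcontra
    obtain ⟨ha3, han, haA⟩ := hmemS a ha
    obtain ⟨hb3, hbn, hbA⟩ := hmemS b hb
    obtain ⟨hc3, hcn, hcA⟩ := hmemS c hc
    have hnat : a + b = c + 2 := by omega
    have hz : (a : ZMod n) + b = c + 2 := by
      have := congrArg (Nat.cast : ℕ → ZMod n) hnat
      push_cast at this
      exact this
    have hane2 : (a : ZMod n) - 2 ≠ 0 := by
      intro h
      have : (a : ZMod n) = 2 := by linear_combination h
      have := congrArg ZMod.val this
      rw [hvcast a ha, v2] at this
      omega
    have hk := key _ _ _ _ haA h2A' hcA hbA (by linear_combination hz) hane2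
    have := congrArg ZMod.val hk.2
    rw [hvcast b hb, v2] at this
    omega
  · -- S* vs S⁻
    intro a ha b hb c hc hbc hcontra
    obtain ⟨ha3, han, haA⟩ := hmemS a ha
    obtain ⟨hb3, hbn, hbA⟩ := hmemS b hb
    obtain ⟨hc3, hcn, hcA⟩ := hmemS c hc
    have hnat : n + b = a + c := by omega
    have hz : (b : ZMod n) = a + c := by
      have := congrArg (Nat.cast : ℕ → ZMod n) hnat
      push_cast at this
      rwa [ZMod.natCast_self, zero_add] at this
    have hcne : (c : ZMod n) - 0 ≠ 0 := by
      intro h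
      have : (c : ZMod n) = 0 := by linear_combination h
      have := congrArg ZMod.val this
      rw [hvcast c hc, ZMod.val_zero] at this
      omega
    have hk := key _ _ _ _ hcA h0A' hbA haA (by linear_combination -hz) hcne
    have := congrArg ZMod.val hk.2
    rw [hvcast a ha, ZMod.val_zero] at this
    omega
  · -- cardinality
    have hinj : Function.Injective (ZMod.val : ZMod n → ℕ) := by
      intro x y h
      rw [← ZMod.natCast_rightInverse x, ← ZMod.natCast_rightInverse y, h]
    have hScard : S.card = T.card := Finset.card_image_of_injective _ hinj
    have h2T : (2 : ZMod n) ∈ A'.erase 0 := Finset.mem_erase.2 ⟨h2ne, h2A'⟩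
    have hTcard : T.card = A'.card - 2 := by
      rw [hTdef, Finset.card_erase_of_mem h2T, Finset.card_erase_of_mem h0A']
      omega
    have hA'card : A'.card = A.card :=
      Finset.card_image_of_injective _ (sub_left_injective)
    have h2le : 2 ≤ A'.card := by
      have := Finset.one_lt_card.2 ⟨0, h0A', 2, h2A', h2ne.symm⟩
      omega
    have : S.card = A.card - 2 := by omega
    omega
end

section
/- If n ≥ 4 and S ⊆ {3,4,...,n-1}, then the graph G_n(S) contains exactly 1 + 2|S| + C(|S|,2) cycles, where C(|S|,2) is the binomial coefficient |S| choose 2. -/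
/-!
In the paper's numbering, vertex `1` is the hub carrying all chords. Every other vertex `v` lies
on the two ring edges `{v - 1, v}`, `{v, v + 1}` and on at most one chord `{1, v}`. A cycle meets
every vertex in `0` or `2` of its edges, so it contains both or neither of the ring edges at `v`
unless it uses the chord `{1, v}`, in which case it contains exactly one of them. Hence a cycle is
determined by the set `T ⊆ S` of chords it uses together with whether it contains the ring edge
`{1, 2}`. At the hub the cycle has degree at most `2`, which forces `|T| ≤ 2`, excludes `{1, 2}`
when `|T| = 2`, and (the cycle being nonempty) forces `{1, 2}` when `T = ∅`. Each of the remaining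
`1 + 2|S| + C(|S|, 2)` patterns is realised by a cycle `1 → s → s + 1 → ⋯ → t → 1`.
-/

lemma Nat.add_one_mod_eq_iff_s8 {x y n : ℕ} (hx : x < n) (hy : y < n) :
    (x + 1) % n = y ↔ x + 1 = y ∨ (x + 1 = n ∧ y = 0) := by
  rcases (show x + 1 < n ∨ x + 1 = n by omega) with h | h
  · rw [Nat.mod_eq_of_lt h]
    omega
  · rw [h, Nat.mod_self]
    omega

namespace Fin

open Fin.NatCast

variable {n : ℕ} [NeZero n]

lemma natCast_inj_of_lt {x y : ℕ} (hx : x < n) (hy : y < n) : (x : Fin n) = y ↔ x = y := by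
  rw [Fin.ext_iff, val_natCast, val_natCast, Nat.mod_eq_of_lt hx, Nat.mod_eq_of_lt hy]

lemma exists_natCast_eq (x : Fin n) : ∃ i < n, (i : Fin n) = x :=
  ⟨x, x.isLt, cast_val_eq_self x⟩

end Fin

namespace Set

variable {α : Type*} {N : Set α} {x y z : α}

lemma mem_iff_mem_of_subset_pair (hN : N.ncard = 0 ∨ N.ncard = 2) (hsub : N ⊆ {x, y}) :
    x ∈ N ↔ y ∈ N := by
  have hfin : N.Finite := (toFinite {x, y}).subset hsub
  rcases hN with hN | hN
  · simp [(ncard_eq_zero hfin).mp hN]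
  · rw [eq_of_subset_of_ncard_le hsub (hN ▸ (ncard_insert_le x {y}).trans (by simp))]
    simp

lemma iff_iff_notMem_of_subset_triple (hN : N.ncard = 0 ∨ N.ncard = 2) (hsub : N ⊆ {x, y, z})
    (hxy : x ≠ y) (hxz : x ≠ z) (hyz : y ≠ z) : (x ∈ N ↔ y ∈ N) ↔ z ∉ N := by
  have hfin : N.Finite := (toFinite {x, y, z}).subset hsub
  rcases hN with hN | hN
  · simp [(ncard_eq_zero hfin).mp hN]
  · obtain ⟨a, b, hab, rfl⟩ := ncard_eq_two.mp hN
    have ha := hsub (mem_insert a {b})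
    have hb := hsub (mem_insert_of_mem a rfl)
    simp only [mem_insert_iff, mem_singleton_iff] at ha hb ⊢
    rcases ha with rfl | rfl | rfl <;> rcases hb with rfl | rfl | rfl <;> tauto

end Set

namespace SimpleGraph.Walk

variable {V : Type*} {G : SimpleGraph V}

lemma IsCycle.ncard_neighborSet_toSubgraph_eq_zero_or_two {u : V} {p : G.Walk u u}
    (hp : p.IsCycle) (v : V) :
    (p.toSubgraph.neighborSet v).ncard = 0 ∨ (p.toSubgraph.neighborSet v).ncard = 2 := by
  by_cases hv : v ∈ p.support
  · exact Or.inr (hp.ncard_neighborSet_toSubgraph_eq_two hv)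
  · left
    rw [Set.ncard_eq_zero (finite_neighborSet_toSubgraph p), Set.eq_empty_iff_forall_notMem]
    exact fun w hw => hv (p.mem_verts_toSubgraph.mp (p.toSubgraph.edge_vert hw))

lemma IsCycle.card_le_two_of_subset_neighborSet {u v : V} {p : G.Walk u u} (hp : p.IsCycle)
    {F : Finset V} (hF : ↑F ⊆ p.toSubgraph.neighborSet v) : F.card ≤ 2 := by
  have := Set.ncard_le_ncard hF (finite_neighborSet_toSubgraph p)
  rw [Set.ncard_coe_finset] at this
  rcases hp.ncard_neighborSet_toSubgraph_eq_zero_or_two v with h | h <;> omega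

lemma IsPath.isCycle_cons_concat {u v w : V} {q : G.Walk v w} (hq : q.IsPath)
    (hu : u ∉ q.support) (hvw : v ≠ w) (huv : G.Adj u v) (hwu : G.Adj w u) :
    (cons huv (q.concat hwu)).IsCycle := by
  refine (cons_isCycle_iff _ huv).mpr ⟨hq.concat hu hwu, ?_⟩
  rw [edges_concat, List.concat_eq_append, List.mem_append, List.mem_singleton, not_or]
  refine ⟨fun h => hu (q.fst_mem_support_of_mem_edges h), fun h => ?_⟩
  rcases Sym2.eq_iff.mp h with ⟨-, hvu⟩ | ⟨-, rfl⟩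
  · exact huv.ne hvu.symm
  · exact hvw rfl

def ofSucc (f : ℕ → V) (hf : ∀ i, G.Adj (f i) (f (i + 1))) : (ℓ : ℕ) → G.Walk (f 0) (f ℓ)
  | 0 => nil
  | ℓ + 1 => (ofSucc f hf ℓ).concat (hf ℓ)

variable (f : ℕ → V) (hf : ∀ i, G.Adj (f i) (f (i + 1)))

lemma support_ofSucc (ℓ : ℕ) : (ofSucc f hf ℓ).support = (List.range (ℓ + 1)).map f := by
  induction ℓ with
  | zero => rfl
  | succ ℓ ih =>
    rw [ofSucc, support_concat, ih]
    simp [List.range_succ]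

lemma edges_ofSucc (ℓ : ℕ) :
    (ofSucc f hf ℓ).edges = (List.range ℓ).map fun i => s(f i, f (i + 1)) := by
  induction ℓ with
  | zero => rfl
  | succ ℓ ih =>
    rw [ofSucc, edges_concat, ih]
    simp [List.range_succ]

lemma isPath_ofSucc {ℓ : ℕ} (hinj : Set.InjOn f (Set.Iic ℓ)) : (ofSucc f hf ℓ).IsPath := by
  rw [isPath_def, support_ofSucc]
  refine List.Nodup.map_on (fun i hi j hj hij => hinj ?_ ?_ hij) List.nodup_range <;>
    simp_all

end SimpleGraph.Walk

open SimpleGraph Walk Finset Fin.NatCast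

namespace GnS

variable {n : ℕ} [NeZero n] {S : Finset ℕ}

lemma adj_natCast_iff {x y : ℕ} (hx : x < n) (hy : y < n) :
    (GnS n S).Adj x y ↔ x ≠ y ∧ (x + 1 = y ∨ y + 1 = x ∨ (x + 1 = n ∧ y = 0) ∨
      (y + 1 = n ∧ x = 0) ∨ (x = 0 ∧ y + 1 ∈ S) ∨ (y = 0 ∧ x + 1 ∈ S)) := by
  simp only [GnS, fromRel_adj, ne_eq, Fin.natCast_inj_of_lt hx hy, Fin.val_natCast,
    Nat.mod_eq_of_lt hx, Nat.mod_eq_of_lt hy, Nat.add_one_mod_eq_iff_s8 hx hy,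
    Nat.add_one_mod_eq_iff_s8 hy hx]
  tauto

lemma adj_natCast_succ (hn : 2 ≤ n) (i : ℕ) :
    (GnS n S).Adj (i : Fin n) ((i + 1 : ℕ) : Fin n) := by
  have hi : i % n < n := Nat.mod_lt i (by omega)
  have h1 : (i : Fin n) = ((i % n : ℕ) : Fin n) := by
    rw [Fin.ext_iff, Fin.val_natCast, Fin.val_natCast, Nat.mod_mod]
  have h2 : ((i + 1 : ℕ) : Fin n) = ((i % n + 1 : ℕ) : Fin n) := by
    rw [Fin.ext_iff, Fin.val_natCast, Fin.val_natCast, Nat.mod_add_mod]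
  rw [h1, h2]
  rcases (show i % n + 1 < n ∨ i % n + 1 = n by omega) with h | h
  · rw [adj_natCast_iff hi h]
    omega
  · rw [h, Fin.natCast_self, ← Nat.cast_zero, adj_natCast_iff hi (by omega)]
    omega

lemma adj_zero_one (hn : 2 ≤ n) : (GnS n S).Adj 0 ((1 : ℕ) : Fin n) := by
  simpa using adj_natCast_succ (S := S) hn 0

lemma adj_pred_zero (hn : 2 ≤ n) : (GnS n S).Adj ((n - 1 : ℕ) : Fin n) 0 := by
  simpa [Nat.sub_add_cancel (show 1 ≤ n by omega)] using adj_natCast_succ (S := S) hn (n - 1)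

lemma adj_zero_chord (hS : S ⊆ Finset.Icc 3 (n - 1)) {a : ℕ} (ha : a ∈ S) :
    (GnS n S).Adj 0 ((a - 1 : ℕ) : Fin n) := by
  have := mem_Icc.mp (hS ha)
  rw [← Nat.cast_zero, adj_natCast_iff (by omega) (by omega), Nat.sub_add_cancel (by omega)]
  grind

lemma eq_of_adj_natCast {k : ℕ} (hk : 1 ≤ k) (hkn : k < n) {x : Fin n}
    (h : (GnS n S).Adj k x) :
    x = ((k - 1 : ℕ) : Fin n) ∨ x = ((k + 1 : ℕ) : Fin n) ∨ (k + 1 ∈ S ∧ x = 0) := by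
  obtain ⟨y, hy, rfl⟩ := Fin.exists_natCast_eq x
  rw [adj_natCast_iff hkn hy] at h
  have h0 : (y : Fin n) = 0 ↔ y = 0 := by
    rw [← Nat.cast_zero, Fin.natCast_inj_of_lt hy (by omega)]
  rw [Fin.natCast_inj_of_lt hy (show k - 1 < n by omega), h0]
  rcases (show k + 1 < n ∨ k + 1 = n by omega) with hk1 | hk1
  · rw [Fin.natCast_inj_of_lt hy hk1]
    grind
  · rw [hk1, Fin.natCast_self, h0]
    grind

/-- With label `i` standing for the paper's vertex `i + 1`, `ringEdge n i` is the ring edge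
`{i + 1, i + 2}` of `C_n` and `chordEdge n a` is the chord `{1, a}`. -/
def ringEdge (n : ℕ) [NeZero n] (i : ℕ) : Sym2 (Fin n) := s((i : Fin n), ((i + 1 : ℕ) : Fin n))

def chordEdge (n : ℕ) [NeZero n] (a : ℕ) : Sym2 (Fin n) := s(0, ((a - 1 : ℕ) : Fin n))

lemma ringEdge_zero : ringEdge n 0 = s(0, 1) := by
  simp [ringEdge]

lemma ringEdge_pred {k : ℕ} (hk : 1 ≤ k) :
    ringEdge n (k - 1) = s((k : Fin n), ((k - 1 : ℕ) : Fin n)) := by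
  rw [ringEdge, Nat.sub_add_cancel hk, Sym2.eq_swap]

lemma chordEdge_succ (k : ℕ) : chordEdge n (k + 1) = s((k : Fin n), 0) := by
  rw [chordEdge, Nat.add_sub_cancel, Sym2.eq_swap]

lemma zero_notMem_ringEdge {i : ℕ} (hi : 1 ≤ i) (hin : i + 1 < n) :
    (0 : Fin n) ∉ ringEdge n i := by
  rw [ringEdge, Sym2.mem_iff, ← Nat.cast_zero, Fin.natCast_inj_of_lt (by omega) (by omega),
    Fin.natCast_inj_of_lt (by omega) hin]
  omega

lemma mem_edgeSet_cases {e : Sym2 (Fin n)} (he : e ∈ (GnS n S).edgeSet) :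
    (∃ i < n, e = ringEdge n i) ∨ ∃ a ∈ S, e = chordEdge n a := by
  induction e using Sym2.ind with
  | _ x y =>
  obtain ⟨i, hi, rfl⟩ := Fin.exists_natCast_eq x
  obtain ⟨j, hj, rfl⟩ := Fin.exists_natCast_eq y
  rw [SimpleGraph.mem_edgeSet, adj_natCast_iff hi hj] at he
  rcases he.2 with h | h | ⟨h1, h2⟩ | ⟨h1, h2⟩ | ⟨h1, h2⟩ | ⟨h1, h2⟩
  · exact Or.inl ⟨i, hi, by rw [ringEdge, h]⟩
  · exact Or.inl ⟨j, hj, by rw [ringEdge, h, Sym2.eq_swap]⟩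
  · exact Or.inl ⟨i, hi, by rw [ringEdge, h1, h2, Fin.natCast_self, Nat.cast_zero]⟩
  · exact Or.inl ⟨j, hj, by rw [ringEdge, h1, h2, Fin.natCast_self, Nat.cast_zero, Sym2.eq_swap]⟩
  · exact Or.inr ⟨j + 1, h2, by rw [chordEdge, h1, Nat.add_sub_cancel, Nat.cast_zero]⟩
  · exact Or.inr ⟨i + 1, h2, by
      rw [chordEdge, h1, Nat.add_sub_cancel, Nat.cast_zero, Sym2.eq_swap]⟩

open scoped Classical in
noncomputable def chords (S : Finset ℕ) (E : Set (Sym2 (Fin n))) : Finset ℕ :=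
  {a ∈ S | chordEdge n a ∈ E}

open scoped Classical in
noncomputable def chordPattern (S : Finset ℕ) (E : Set (Sym2 (Fin n))) : Finset ℕ × Bool :=
  (chords S E, decide (ringEdge n 0 ∈ E))

def admissiblePatterns (S : Finset ℕ) : Finset (Finset ℕ × Bool) :=
  S.powersetCard 0 ×ˢ {true} ∪ S.powersetCard 1 ×ˢ univ ∪ S.powersetCard 2 ×ˢ {false}

lemma mem_chords {E : Set (Sym2 (Fin n))} {a : ℕ} :
    a ∈ chords S E ↔ a ∈ S ∧ chordEdge n a ∈ E := by
  simp [chords]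

lemma mem_admissiblePatterns {T : Finset ℕ} {b : Bool} :
    (T, b) ∈ admissiblePatterns S ↔
      T ⊆ S ∧ (#T = 0 ∧ b = true ∨ #T = 1 ∨ #T = 2 ∧ b = false) := by
  simp only [admissiblePatterns, mem_union, mem_product, mem_powersetCard, mem_singleton, mem_univ]
  tauto

lemma card_admissiblePatterns : #(admissiblePatterns S) = 1 + 2 * #S + (#S).choose 2 := by
  rw [admissiblePatterns, card_union_of_disjoint, card_union_of_disjoint]
  · simp only [card_product, card_powersetCard, card_singleton, card_univ, Fintype.card_bool,
      Nat.choose_zero_right, Nat.choose_one_right]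
    ring
  all_goals
    refine disjoint_left.mpr fun ⟨T, b⟩ h1 h2 => ?_
    simp only [mem_union, mem_product, mem_powersetCard] at h1 h2
    omega

section Cycle

variable {u : Fin n} {p : (GnS n S).Walk u u}

lemma ringEdge_pred_mem_iff (hS : S ⊆ Finset.Icc 3 (n - 1)) (hp : p.IsCycle) {k : ℕ}
    (hk : 1 ≤ k) (hkn : k < n) :
    (ringEdge n (k - 1) ∈ p.edges ↔ ringEdge n k ∈ p.edges) ↔
      k + 1 ∉ chords S {e | e ∈ p.edges} := by
  have hN := hp.ncard_neighborSet_toSubgraph_eq_zero_or_two (k : Fin n)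
  have hsub (x) (hx : x ∈ p.toSubgraph.neighborSet k) :=
    eq_of_adj_natCast hk hkn (p.toSubgraph.adj_sub hx)
  rw [ringEdge_pred hk, show ringEdge n k = s((k : Fin n), ((k + 1 : ℕ) : Fin n)) from rfl]
  simp only [mem_chords, Set.mem_ofPred_eq, chordEdge_succ, ← adj_toSubgraph_iff_mem_edges,
    ← Subgraph.mem_neighborSet]
  by_cases hkS : k + 1 ∈ S
  · have := mem_Icc.mp (hS hkS)
    simp only [hkS, true_and]
    refine Set.iff_iff_notMem_of_subset_triple hN (fun x hx => ?_) ?_ ?_ ?_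
    · rcases hsub x hx with h | h | ⟨-, h⟩ <;> simp [h]
    · rw [Ne, Fin.natCast_inj_of_lt (by omega) (by omega)]
      omega
    all_goals
      rw [Ne, ← Nat.cast_zero, Fin.natCast_inj_of_lt (by omega) (by omega)]
      omega
  · simp only [hkS, false_and, not_false_eq_true, iff_true]
    refine Set.mem_iff_mem_of_subset_pair hN (fun x hx => ?_)
    rcases hsub x hx with h | h | ⟨h, -⟩
    · simp [h]
    · simp [h]
    · exact absurd h hkS

lemma ringEdge_mem_iff (hS : S ⊆ Finset.Icc 3 (n - 1)) (hp : p.IsCycle) {k : ℕ} (hk : k < n) :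
    (ringEdge n k ∈ p.edges ↔ ringEdge n 0 ∈ p.edges) ↔
      Even #{a ∈ chords S {e | e ∈ p.edges} | a ≤ k + 1} := by
  set T := chords S {e | e ∈ p.edges}
  have hT (a) (ha : a ∈ T) : 3 ≤ a := (mem_Icc.mp (hS (mem_chords.mp ha).1)).1
  induction k with
  | zero =>
    rw [filter_false_of_mem fun a ha => by have := hT a ha; omega]
    simp
  | succ k ih =>
    have hstep := ringEdge_pred_mem_iff hS hp (k := k + 1) (by omega) hk
    rw [Nat.add_sub_cancel] at hstep
    by_cases hkT : k + 1 + 1 ∈ T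
    · rw [show {a ∈ T | a ≤ k + 1 + 1} = insert (k + 1 + 1) {a ∈ T | a ≤ k + 1} by grind,
        card_insert_of_notMem (by simp), Nat.even_add_one]
      grind
    · rw [show {a ∈ T | a ≤ k + 1 + 1} = {a ∈ T | a ≤ k + 1} by grind]
      grind

lemma natCast_pred_mem_neighborSet_zero {a : ℕ} (ha : a ∈ chords S {e | e ∈ p.edges}) :
    ((a - 1 : ℕ) : Fin n) ∈ p.toSubgraph.neighborSet 0 :=
  adj_toSubgraph_iff_mem_edges.mpr (mem_chords.mp ha).2

lemma card_image_chords (hS : S ⊆ Finset.Icc 3 (n - 1)) :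
    #((chords S {e | e ∈ p.edges}).image fun a => ((a - 1 : ℕ) : Fin n)) =
      #(chords S {e | e ∈ p.edges}) := by
  refine card_image_of_injOn fun a ha b hb hab => ?_
  have := mem_Icc.mp (hS (mem_chords.mp ha).1)
  have := mem_Icc.mp (hS (mem_chords.mp hb).1)
  rw [Fin.natCast_inj_of_lt (by omega) (by omega)] at hab
  omega

lemma card_chords_le_two (hS : S ⊆ Finset.Icc 3 (n - 1)) (hp : p.IsCycle) :
    #(chords S {e | e ∈ p.edges}) ≤ 2 := by
  rw [← card_image_chords hS]
  refine hp.card_le_two_of_subset_neighborSet (v := 0) fun x hx => ?_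
  obtain ⟨a, ha, rfl⟩ := mem_image.mp hx
  exact natCast_pred_mem_neighborSet_zero ha

lemma card_chords_le_one (hS : S ⊆ Finset.Icc 3 (n - 1)) (hp : p.IsCycle)
    (h0 : ringEdge n 0 ∈ p.edges) : #(chords S {e | e ∈ p.edges}) ≤ 1 := by
  set F := (chords S {e | e ∈ p.edges}).image fun a => ((a - 1 : ℕ) : Fin n)
  have h1 : (1 : Fin n) ∉ F := by
    simp only [F, mem_image, not_exists, not_and]
    intro a ha h
    have := mem_Icc.mp (hS (mem_chords.mp ha).1)
    rw [show (1 : Fin n) = ((1 : ℕ) : Fin n) by simp,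
      Fin.natCast_inj_of_lt (by omega) (by omega)] at h
    omega
  have hsub : ↑(insert 1 F) ⊆ p.toSubgraph.neighborSet 0 := by
    rw [coe_insert, Set.insert_subset_iff]
    refine ⟨adj_toSubgraph_iff_mem_edges.mpr (ringEdge_zero (n := n) ▸ h0), fun x hx => ?_⟩
    obtain ⟨a, ha, rfl⟩ := mem_image.mp hx
    exact natCast_pred_mem_neighborSet_zero ha
  have := hp.card_le_two_of_subset_neighborSet hsub
  rw [card_insert_of_notMem h1, card_image_chords hS] at this
  omega

lemma ringEdge_zero_mem_of_chords_eq_empty (hS : S ⊆ Finset.Icc 3 (n - 1)) (hp : p.IsCycle)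
    (hT : chords S {e | e ∈ p.edges} = ∅) : ringEdge n 0 ∈ p.edges := by
  obtain ⟨e, he⟩ := List.exists_mem_of_ne_nil p.edges (edges_eq_nil.not.mpr hp.not_nil)
  rcases mem_edgeSet_cases (p.edges_subset_edgeSet he) with ⟨i, hi, rfl⟩ | ⟨a, ha, rfl⟩
  · have := ringEdge_mem_iff hS hp hi
    simp only [hT, filter_empty, card_empty, Even.zero, iff_true] at this
    exact this.mp he
  · exact absurd (mem_chords.mpr ⟨ha, he⟩) (hT ▸ notMem_empty a)

lemma chordPattern_mem_admissiblePatterns (hS : S ⊆ Finset.Icc 3 (n - 1)) (hp : p.IsCycle) :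
    chordPattern S {e | e ∈ p.edges} ∈ admissiblePatterns S := by
  rw [chordPattern, mem_admissiblePatterns]
  refine ⟨fun a ha => (mem_chords.mp ha).1, ?_⟩
  have h2 := card_chords_le_two hS hp
  by_cases h0 : ringEdge n 0 ∈ p.edges
  · have := card_chords_le_one hS hp h0
    simp only [Set.mem_ofPred_eq, h0, decide_true, and_true, Bool.true_eq_false, and_false,
      or_false]
    omega
  · have := mt card_eq_zero.mp (mt (ringEdge_zero_mem_of_chords_eq_empty hS hp) h0)
    simp only [Set.mem_ofPred_eq, h0, decide_false, Bool.false_eq_true, and_false, and_true,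
      false_or]
    omega

lemma edges_subset_of_chordPattern_eq (hS : S ⊆ Finset.Icc 3 (n - 1)) {v : Fin n}
    {q : (GnS n S).Walk v v} (hp : p.IsCycle) (hq : q.IsCycle)
    (h : chordPattern S {e | e ∈ p.edges} = chordPattern S {e | e ∈ q.edges}) :
    {e | e ∈ p.edges} ⊆ {e | e ∈ q.edges} := by
  simp only [chordPattern, Prod.mk.injEq, decide_eq_decide] at h
  obtain ⟨hT, h0⟩ := h
  intro e he
  rcases mem_edgeSet_cases (p.edges_subset_edgeSet he) with ⟨i, hi, rfl⟩ | ⟨a, ha, rfl⟩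
  · have hpi := ringEdge_mem_iff hS hp hi
    have hqi := ringEdge_mem_iff hS hq hi
    rw [hT] at hpi
    simp only [Set.mem_ofPred_eq] at he h0 ⊢
    tauto
  · exact (mem_chords.mp (hT ▸ mem_chords.mpr ⟨ha, he⟩)).2

end Cycle

lemma exists_isCycle_through_zero {s t : ℕ} (hs : 1 ≤ s) (hst : s < t) (ht : t < n)
    (h0s : (GnS n S).Adj 0 s) (ht0 : (GnS n S).Adj t 0) :
    ∃ (u : Fin n) (p : (GnS n S).Walk u u), p.IsCycle ∧ ∀ e, e ∈ p.edges ↔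
      e = s(0, (s : Fin n)) ∨ e = s(0, (t : Fin n)) ∨ ∃ i, s ≤ i ∧ i < t ∧ e = ringEdge n i := by
  set f : ℕ → Fin n := fun k => ((s + k : ℕ) : Fin n)
  have hf (k : ℕ) : (GnS n S).Adj (f k) (f (k + 1)) := adj_natCast_succ (by omega) (s + k)
  have hfinj : Set.InjOn f (Set.Iic (t - s)) := fun i hi j hj h => by
    simp only [Set.mem_Iic] at hi hj
    simp only [f, Fin.natCast_inj_of_lt (show s + i < n by omega) (show s + j < n by omega)] at h
    omega
  let q := (ofSucc f hf (t - s)).copy (show f 0 = s by simp [f])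
    (show ((s + (t - s) : ℕ) : Fin n) = t by rw [Nat.add_sub_cancel' hst.le])
  have hq : q.IsPath := (isPath_copy _ _ _).mpr (isPath_ofSucc f hf hfinj)
  have hsupp : (0 : Fin n) ∉ q.support := by
    simp only [q, support_copy, support_ofSucc, List.mem_map, List.mem_range, not_exists, not_and]
    intro k hk h
    rw [← Nat.cast_zero, Fin.natCast_inj_of_lt (by omega) (by omega)] at h
    omega
  have hst' : (s : Fin n) ≠ t := by
    rw [Ne, Fin.natCast_inj_of_lt (by omega) ht]
    omega
  refine ⟨0, cons h0s (q.concat ht0), hq.isCycle_cons_concat hsupp hst' h0s ht0, fun e => ?_⟩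
  simp only [q, edges_cons, edges_concat, edges_copy, edges_ofSucc, List.concat_eq_append,
    List.mem_cons, List.mem_append, List.mem_map, List.mem_range, List.not_mem_nil, or_false,
    Sym2.eq_swap (a := (t : Fin n))]
  constructor
  · rintro (h | ⟨k, hk, rfl⟩ | h)
    · exact Or.inl h
    · exact Or.inr (Or.inr ⟨s + k, by omega, by omega, rfl⟩)
    · exact Or.inr (Or.inl h)
  · rintro (h | h | ⟨i, hi, hit, rfl⟩)
    · exact Or.inl h
    · exact Or.inr (Or.inr h)
    · refine Or.inr (Or.inl ⟨i - s, by omega, ?_⟩)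
      simp only [f, ringEdge, ← Nat.add_assoc, Nat.add_sub_cancel' hi]

lemma chordPattern_eq_of_forall_mem_iff (hS : S ⊆ Finset.Icc 3 (n - 1)) {s t : ℕ}
    (hs : 1 ≤ s) (hst : s < t) (ht : t < n) {E : Set (Sym2 (Fin n))}
    (hE : ∀ e, e ∈ E ↔
      e = s(0, (s : Fin n)) ∨ e = s(0, (t : Fin n)) ∨ ∃ i, s ≤ i ∧ i < t ∧ e = ringEdge n i) :
    chordPattern S E = ({a ∈ S | a = s + 1 ∨ a = t + 1}, decide (s = 1)) := by
  have hring {x : Fin n} : ¬∃ i, s ≤ i ∧ i < t ∧ s(0, x) = ringEdge n i := by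
    rintro ⟨i, hi, hit, h⟩
    exact zero_notMem_ringEdge (by omega) (by omega) (h ▸ Sym2.mem_mk_left 0 x)
  simp only [chordPattern, Prod.mk.injEq]
  constructor
  · ext a
    rw [mem_chords, mem_filter, hE, chordEdge]
    by_cases ha : a ∈ S
    · have := mem_Icc.mp (hS ha)
      simp only [ha, true_and, Sym2.congr_right, Fin.natCast_inj_of_lt (show a - 1 < n by omega) ht,
        Fin.natCast_inj_of_lt (show a - 1 < n by omega) (show s < n by omega), hring, or_false]
      omega
    · simp [ha]
  · rw [decide_eq_decide, hE, ringEdge_zero, Sym2.congr_right, Sym2.congr_right,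
      show (1 : Fin n) = ((1 : ℕ) : Fin n) by simp, Fin.natCast_inj_of_lt (by omega) (by omega),
      Fin.natCast_inj_of_lt (by omega) ht]
    simp only [hring, or_false]
    omega

lemma exists_isCycle_chordPattern_eq_of_adj (hS : S ⊆ Finset.Icc 3 (n - 1)) {s t : ℕ}
    (hs : 1 ≤ s) (hst : s < t) (ht : t < n) (h0s : (GnS n S).Adj 0 s) (ht0 : (GnS n S).Adj t 0) :
    ∃ (u : Fin n) (p : (GnS n S).Walk u u), p.IsCycle ∧
      chordPattern S {e | e ∈ p.edges} = ({a ∈ S | a = s + 1 ∨ a = t + 1}, decide (s = 1)) := by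
  obtain ⟨u, p, hp, hE⟩ := exists_isCycle_through_zero hs hst ht h0s ht0
  exact ⟨u, p, hp, chordPattern_eq_of_forall_mem_iff hS hs hst ht hE⟩

lemma exists_isCycle_chordPattern_eq_empty (hn : 4 ≤ n) (hS : S ⊆ Finset.Icc 3 (n - 1)) :
    ∃ (u : Fin n) (p : (GnS n S).Walk u u), p.IsCycle ∧
      chordPattern S {e | e ∈ p.edges} = (∅, true) := by
  obtain ⟨u, p, hp, h⟩ := exists_isCycle_chordPattern_eq_of_adj hS le_rfl
    (show 1 < n - 1 by omega) (by omega) (adj_zero_one (by omega)) (adj_pred_zero (by omega))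
  refine ⟨u, p, hp, h.trans (Prod.ext (ext fun c => ?_) (by simp))⟩
  simp only [mem_filter, notMem_empty, iff_false, not_and]
  intro hc
  have := mem_Icc.mp (hS hc)
  omega

lemma exists_isCycle_chordPattern_eq_singleton (hS : S ⊆ Finset.Icc 3 (n - 1)) {a : ℕ}
    (ha : a ∈ S) (b : Bool) :
    ∃ (u : Fin n) (p : (GnS n S).Walk u u), p.IsCycle ∧
      chordPattern S {e | e ∈ p.edges} = ({a}, b) := by
  have := mem_Icc.mp (hS ha)
  have hbound (c : ℕ) : c ∈ S → 3 ≤ c ∧ c ≤ n - 1 := fun hc => mem_Icc.mp (hS hc)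
  cases b
  · obtain ⟨u, p, hp, h⟩ := exists_isCycle_chordPattern_eq_of_adj hS (show 1 ≤ a - 1 by omega)
      (show a - 1 < n - 1 by omega) (by omega) (adj_zero_chord hS ha) (adj_pred_zero (by omega))
    refine ⟨u, p, hp, h.trans (Prod.ext (ext fun c => ?_) (decide_eq_false (by omega)))⟩
    have := hbound c
    simp only [mem_filter, mem_singleton]
    grind
  · obtain ⟨u, p, hp, h⟩ := exists_isCycle_chordPattern_eq_of_adj hS le_rfl
      (show 1 < a - 1 by omega) (by omega) (adj_zero_one (by omega)) (adj_zero_chord hS ha).symm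
    refine ⟨u, p, hp, h.trans (Prod.ext (ext fun c => ?_) (by simp))⟩
    have := hbound c
    simp only [mem_filter, mem_singleton]
    grind

lemma exists_isCycle_chordPattern_eq_pair (hS : S ⊆ Finset.Icc 3 (n - 1)) {a c : ℕ}
    (ha : a ∈ S) (hc : c ∈ S) (hac : a < c) :
    ∃ (u : Fin n) (p : (GnS n S).Walk u u), p.IsCycle ∧
      chordPattern S {e | e ∈ p.edges} = ({a, c}, false) := by
  have := mem_Icc.mp (hS ha)
  have := mem_Icc.mp (hS hc)
  obtain ⟨u, p, hp, h⟩ := exists_isCycle_chordPattern_eq_of_adj hS (show 1 ≤ a - 1 by omega)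
    (show a - 1 < c - 1 by omega) (by omega) (adj_zero_chord hS ha) (adj_zero_chord hS hc).symm
  refine ⟨u, p, hp, h.trans (Prod.ext (ext fun d => ?_) (decide_eq_false (by omega)))⟩
  simp only [mem_filter, mem_insert, mem_singleton]
  grind

lemma exists_isCycle_chordPattern_eq (hn : 4 ≤ n) (hS : S ⊆ Finset.Icc 3 (n - 1))
    {P : Finset ℕ × Bool} (hP : P ∈ admissiblePatterns S) :
    ∃ (u : Fin n) (p : (GnS n S).Walk u u), p.IsCycle ∧ chordPattern S {e | e ∈ p.edges} = P := by
  obtain ⟨T, b⟩ := P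
  obtain ⟨hTS, ⟨hT, rfl⟩ | hT | ⟨hT, rfl⟩⟩ := mem_admissiblePatterns.mp hP
  · rw [card_eq_zero.mp hT]
    exact exists_isCycle_chordPattern_eq_empty hn hS
  · obtain ⟨a, rfl⟩ := card_eq_one.mp hT
    exact exists_isCycle_chordPattern_eq_singleton hS (hTS (mem_singleton_self a)) b
  · obtain ⟨a, c, hac, rfl⟩ := card_eq_two.mp hT
    have ha := hTS (mem_insert_self a {c})
    have hc := hTS (mem_insert_of_mem (mem_singleton_self c))
    rcases lt_or_gt_of_ne hac with h | h
    · exact exists_isCycle_chordPattern_eq_pair hS ha hc h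
    · rw [pair_comm]
      exact exists_isCycle_chordPattern_eq_pair hS hc ha h

end GnS

open GnS in
/-- If `n ≥ 4` and `S ⊆ {3, ..., n-1}`, then `G_n(S)` has exactly `1 + 2|S| + C(|S|, 2)`
cycles, where cycles are counted as subgraphs, i.e. two cycles are the same exactly when
they have the same edge set. -/
theorem stmt8 (n : ℕ) (hn : 4 ≤ n) (S : Finset ℕ) (hS : S ⊆ Finset.Icc 3 (n - 1)) :
    Set.ncard {E : Set (Sym2 (Fin n)) |
        ∃ (u : Fin n) (p : (GnS n S).Walk u u), p.IsCycle ∧ E = {e | e ∈ p.edges}} =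
      1 + 2 * S.card + Nat.choose S.card 2 := by
  have : NeZero n := ⟨by omega⟩
  set cycles := {E : Set (Sym2 (Fin n)) |
    ∃ (u : Fin n) (p : (GnS n S).Walk u u), p.IsCycle ∧ E = {e | e ∈ p.edges}}
  have hinj : Set.InjOn (chordPattern S) cycles := by
    rintro _ ⟨u, p, hp, rfl⟩ _ ⟨v, q, hq, rfl⟩ h
    exact (edges_subset_of_chordPattern_eq hS hp hq h).antisymm
      (edges_subset_of_chordPattern_eq hS hq hp h.symm)
  have himage : chordPattern S '' cycles = admissiblePatterns S := by
    ext P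
    constructor
    · rintro ⟨_, ⟨u, p, hp, rfl⟩, rfl⟩
      exact chordPattern_mem_admissiblePatterns hS hp
    · intro hP
      obtain ⟨u, p, hp, rfl⟩ := exists_isCycle_chordPattern_eq hn hS hP
      exact ⟨_, ⟨u, p, hp, rfl⟩, rfl⟩
  rw [← hinj.ncard_image, himage, Set.ncard_coe_finset, card_admissiblePatterns]
end

section
/- Let n ≥ 4 and let B ⊆ Z_n be a perfect difference set containing the residues 0 and 2. Identify B with a subset of {1,2,...,n} via representatives (with 0 identified with n). Then 1 ∉ B, and the set S = B \ {2, n} is a subset of {3,...,n-1} and is a distinct cycle set. -/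
/-- Let `n ≥ 4` and let `B ⊆ ℤ/nℤ` be a perfect difference set containing the residues `0`
and `2`. Identifying `B` with a subset `B'` of `{1, ..., n}` via representatives (`0`
identified with `n`), we have `1 ∉ B'`, and `S = B' \ {2, n}` is a subset of `{3, ..., n-1}`
and is a distinct cycle set. -/
theorem stmt10 (n : ℕ) (hn : 4 ≤ n) (B : Finset (ZMod n)) (hB : PerfectDifferenceSet B)
    (h0 : (0 : ZMod n) ∈ B) (h2 : (2 : ZMod n) ∈ B)
    (B' : Finset ℕ) (hB' : B' = B.image (fun x => if x = 0 then n else x.val)) :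
    1 ∉ B' ∧ (B' \ {2, n}) ⊆ Finset.Icc 3 (n - 1) ∧ DistinctCycleSet n (B' \ {2, n}) := by
  haveI : NeZero n := ⟨by omega⟩
  -- casts
  have hinj : ∀ a b : ℕ, a < n → b < n → (a : ZMod n) = (b : ZMod n) → a = b := by
    intro a b ha hb h
    have := congrArg ZMod.val h
    rwa [ZMod.val_cast_of_lt ha, ZMod.val_cast_of_lt hb] at this
  have hcne : ∀ a : ℕ, 0 < a → a < n → ((a : ℕ) : ZMod n) ≠ 0 := by
    intro a h1 h2 h
    rw [ZMod.natCast_eq_zero_iff] at h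
    exact absurd (Nat.le_of_dvd h1 h) (by omega)
  have hmem : ∀ m : ℕ, m ∈ B' → m ≠ n → ((m : ZMod n) ∈ B ∧ 0 < m ∧ m < n) := by
    intro m hm hmn
    rw [hB', Finset.mem_image] at hm
    obtain ⟨x, hx, hxm⟩ := hm
    by_cases hx0 : x = 0
    · simp [hx0] at hxm; exact absurd hxm.symm hmn
    · simp only [hx0, if_false] at hxm
      subst hxm
      refine ⟨?_, Nat.pos_of_ne_zero (fun h => hx0 ((ZMod.val_eq_zero x).mp h)), x.val_lt⟩
      rwa [ZMod.natCast_val, ZMod.cast_id]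
  have h1B : (1 : ℕ) ∉ B' := by
    intro h1
    obtain ⟨h1B, -, -⟩ := hmem 1 h1 (by omega)
    obtain ⟨p, -, hup⟩ := hB ((1 : ℕ) : ZMod n) (hcne 1 one_pos (by omega))
    have e1 := hup (((1:ℕ):ZMod n), 0) ⟨h1B, h0, by ring⟩
    have e2 := hup (((2:ℕ):ZMod n), ((1:ℕ):ZMod n)) ⟨by push_cast; exact h2, h1B, by push_cast; ring⟩
    have : ((1:ℕ):ZMod n) = ((2:ℕ):ZMod n) := by
      have := e1.trans e2.symm
      exact congrArg Prod.fst this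
    exact absurd (hinj 1 2 (by omega) (by omega) this) (by omega)
  have hS : ∀ m ∈ B' \ ({2, n} : Finset ℕ), (m : ZMod n) ∈ B ∧ 3 ≤ m ∧ m ≤ n - 1 := by
    intro m hm
    rw [Finset.mem_sdiff, Finset.mem_insert, Finset.mem_singleton] at hm
    obtain ⟨hmB, hm2n⟩ := hm
    obtain ⟨hmB', hpos, hlt⟩ := hmem m hmB (fun h => hm2n (Or.inr h))
    have hm1 : m ≠ 1 := fun h => h1B (h ▸ hmB)
    exact ⟨hmB', by omega, by omega⟩
  refine ⟨h1B, ?_, ?_, ?_, ?_, ?_⟩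
  · intro m hm
    obtain ⟨-, h3, hle⟩ := hS m hm
    exact Finset.mem_Icc.mpr ⟨h3, hle⟩
  · -- distinct differences
    intro a ha b hb c hc d hd hab hcd heq
    obtain ⟨haB, ha3, haN⟩ := hS a ha
    obtain ⟨hbB, hb3, hbN⟩ := hS b hb
    obtain ⟨hcB, hc3, hcN⟩ := hS c hc
    obtain ⟨hdB, hd3, hdN⟩ := hS d hd
    obtain ⟨p, -, hup⟩ := hB (((b - a : ℕ)) : ZMod n) (hcne _ (by omega) (by omega))
    have e1 := hup (((b:ℕ):ZMod n), ((a:ℕ):ZMod n))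
      ⟨hbB, haB, by rw [← Nat.cast_sub hab.le]⟩
    have e2 := hup (((d:ℕ):ZMod n), ((c:ℕ):ZMod n))
      ⟨hdB, hcB, by rw [← Nat.cast_sub hcd.le, heq]⟩
    have e := e1.trans e2.symm
    constructor
    · exact hinj a c (by omega) (by omega) (congrArg Prod.snd e)
    · exact hinj b d (by omega) (by omega) (congrArg Prod.fst e)
  · -- S disjoint from S*
    intro a ha b hb hab
    obtain ⟨haB, ha3, haN⟩ := hS a ha
    obtain ⟨hbB, hb3, hbN⟩ := hS b hb
    have hsum : a + b = n + 2 := by omega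
    have hz : ((a:ℕ):ZMod n) + ((b:ℕ):ZMod n) = 2 := by
      have := congrArg (Nat.cast : ℕ → ZMod n) hsum
      push_cast [ZMod.natCast_self] at this
      linear_combination this
    obtain ⟨p, -, hup⟩ := hB (((a - 2 : ℕ)) : ZMod n) (hcne _ (by omega) (by omega))
    have e1 := hup (((a:ℕ):ZMod n), (2 : ZMod n))
      ⟨haB, h2, by rw [Nat.cast_sub (by omega)]; push_cast; ring⟩
    have e2 := hup ((0 : ZMod n), ((b:ℕ):ZMod n))
      ⟨h0, hbB, by rw [Nat.cast_sub (by omega)]; push_cast; linear_combination -hz⟩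
    have e : ((a:ℕ):ZMod n) = 0 := congrArg Prod.fst (e1.trans e2.symm)
    exact hcne a (by omega) (by omega) e
  · -- S disjoint from S^-
    intro a ha b hb c hc hbc hac
    obtain ⟨haB, ha3, haN⟩ := hS a ha
    obtain ⟨hbB, hb3, hbN⟩ := hS b hb
    obtain ⟨hcB, hc3, hcN⟩ := hS c hc
    have hsub : a - 2 = c - b := by omega
    obtain ⟨p, -, hup⟩ := hB (((a - 2 : ℕ)) : ZMod n) (hcne _ (by omega) (by omega))
    have e1 := hup (((a:ℕ):ZMod n), (2 : ZMod n))
      ⟨haB, h2, by rw [Nat.cast_sub (by omega)]; push_cast; ring⟩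
    have e2 := hup (((c:ℕ):ZMod n), ((b:ℕ):ZMod n))
      ⟨hcB, hbB, by rw [hsub, Nat.cast_sub hbc.le]⟩
    have e : (2 : ZMod n) = ((b:ℕ):ZMod n) := congrArg Prod.snd (e1.trans e2.symm)
    have : (2 : ℕ) = b := by
      apply hinj 2 b (by omega) (by omega)
      push_cast
      exact e
    omega
  · -- S* disjoint from S^-
    intro a ha b hb c hc hbc heq
    obtain ⟨haB, ha3, haN⟩ := hS a ha
    obtain ⟨hbB, hb3, hbN⟩ := hS b hb
    obtain ⟨hcB, hc3, hcN⟩ := hS c hc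
    have hsub : n - a = c - b := by omega
    obtain ⟨p, -, hup⟩ := hB (((n - a : ℕ)) : ZMod n) (hcne _ (by omega) (by omega))
    have e1 := hup ((0 : ZMod n), ((a:ℕ):ZMod n))
      ⟨h0, haB, by rw [Nat.cast_sub (by omega)]; push_cast [ZMod.natCast_self]; ring⟩
    have e2 := hup (((c:ℕ):ZMod n), ((b:ℕ):ZMod n))
      ⟨hcB, hbB, by rw [hsub, Nat.cast_sub hbc.le]⟩
    have e : (0 : ZMod n) = ((c:ℕ):ZMod n) := congrArg Prod.fst (e1.trans e2.symm)
    exact hcne c (by omega) (by omega) e.symm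
end

section
/- Let n ≥ 3 and let G be an n-vertex Hamiltonian graph with m edges in which no two cycles have the same length. Then the number k = m - n of chords (edges outside a fixed Hamiltonian cycle) satisfies C(k,2) < n, where C(k,2) is the binomial coefficient k choose 2. -/
/-
Let `H` be the Hamiltonian cycle. Any two chords `e ≠ f` lie on a cycle whose only
edges outside `H` are `e` and `f`: rotating `H` so that it starts at an endpoint of `e`, the
chords together with two vertex-disjoint arcs of `H` close up into a cycle (one arc is traversed
backwards when the chords cross). Distinct pairs of chords thus give cycles with distinct edge
sets, hence of distinct lengths in `[3, n]`, so `C(k, 2) ≤ n - 2`.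
-/

open SimpleGraph

namespace SimpleGraph.Walk

variable {V : Type*} {G : SimpleGraph V}

theorem exists_isPath_getVert_Icc {u v : V} (c : G.Walk u v) {i j : ℕ} (hij : i ≤ j)
    (hinj : Set.InjOn c.getVert (Set.Icc i j)) :
    ∃ p : G.Walk (c.getVert i) (c.getVert j), p.IsPath ∧ p.edges ⊆ c.edges ∧
      ∀ w ∈ p.support, ∃ k ∈ Set.Icc i j, c.getVert k = w := by
  have hend : (c.drop i).getVert (j - i) = c.getVert j := by
    rw [drop_getVert, Nat.add_sub_cancel' hij]
  set p := ((c.drop i).take (j - i)).copy rfl hend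
  have hget : ∀ m, p.getVert m = c.getVert (i + min (j - i) m) := by
    intro m; simp [p]
  have hlen : p.length ≤ j - i := by simp [p]
  refine ⟨p, ?_, ?_, ?_⟩
  · refine (IsPath.getVert_injOn_iff p).mp fun m hm m' hm' h => ?_
    simp only [Set.mem_ofPred_eq] at hm hm'
    rw [hget, hget] at h
    have := hinj ⟨by omega, by omega⟩ ⟨by omega, by omega⟩ h
    omega
  · simp only [p, edges_copy, edges_take, edges_drop]
    exact List.Subset.trans (List.take_subset _ _) (List.drop_subset _ _)
  · intro w hw
    obtain ⟨m, rfl, -⟩ := mem_support_iff_exists_getVert.mp hw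
    exact ⟨i + min (j - i) m, ⟨by omega, by omega⟩, (hget m).symm⟩

theorem IsCycle.injOn_getVert_Icc {u : V} {c : G.Walk u u} (hc : c.IsCycle) {i j : ℕ}
    (hj : j ≤ c.length) (hij : 0 < i ∨ j < c.length) : Set.InjOn c.getVert (Set.Icc i j) := by
  rcases hij with hi | hj'
  · exact hc.getVert_injOn.mono fun k hk => by grind
  · exact hc.getVert_injOn'.mono fun k hk => by grind

theorem isCycle_cons_append_cons {u₁ v₁ u₂ v₂ : V} {p : G.Walk u₁ v₁} {q : G.Walk u₂ v₂}
    (hp : p.IsPath) (hq : q.IsPath) (hpq : ∀ v ∈ p.support, v ∉ q.support)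
    (h₁ : G.Adj v₁ u₂) (h₂ : G.Adj v₂ u₁) (hne : s(v₁, u₂) ≠ s(v₂, u₁)) :
    (cons h₂ (p.append (cons h₁ q))).IsCycle := by
  rw [cons_isCycle_iff, isPath_def, support_append, support_cons, List.tail_cons,
    List.nodup_append, edges_append, edges_cons]
  refine ⟨⟨hp.support_nodup, hq.support_nodup, fun a ha b hb hab => hpq a ha (hab ▸ hb)⟩, ?_⟩
  simp only [List.mem_append, List.mem_cons, not_or]
  refine ⟨fun h => hpq _ (p.snd_mem_support_of_mem_edges (Sym2.eq_swap ▸ h)) q.end_mem_support,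
    Ne.symm hne, fun h => hpq _ p.start_mem_support (q.snd_mem_support_of_mem_edges h)⟩

theorem IsCycle.length_le_card [Fintype V] {u : V} {c : G.Walk u u} (hc : c.IsCycle) :
    c.length ≤ Fintype.card V := by
  have := hc.isPath_tail.length_lt
  rw [length_tail] at this
  omega

theorem exists_lt_length_getVert_eq {u w : V} {c : G.Walk u u} (hc : 0 < c.length)
    (hw : w ∈ c.support) : ∃ k < c.length, c.getVert k = w := by
  obtain ⟨k, rfl, hk⟩ := mem_support_iff_exists_getVert.mp hw
  rcases hk.lt_or_eq with hk | rfl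
  · exact ⟨k, hk, rfl⟩
  · exact ⟨0, hc, by simp⟩

theorem IsCycle.exists_disjoint_isPath_getVert {u : V} {c : G.Walk u u} (hc : c.IsCycle)
    {i j k l : ℕ} (hij : i ≤ j) (hjk : j < k) (hkl : k ≤ l) (hl : l ≤ c.length)
    (hil : 0 < i ∨ l < c.length) :
    ∃ (p : G.Walk (c.getVert i) (c.getVert j)) (q : G.Walk (c.getVert k) (c.getVert l)),
      p.IsPath ∧ q.IsPath ∧ p.edges ⊆ c.edges ∧ q.edges ⊆ c.edges ∧
        ∀ w ∈ p.support, w ∉ q.support := by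
  have hinj := hc.injOn_getVert_Icc hl hil
  obtain ⟨p, hp, hpc, hps⟩ :=
    c.exists_isPath_getVert_Icc hij (hinj.mono (Set.Icc_subset_Icc le_rfl (by omega)))
  obtain ⟨q, hq, hqc, hqs⟩ :=
    c.exists_isPath_getVert_Icc hkl (hinj.mono (Set.Icc_subset_Icc (by omega) le_rfl))
  refine ⟨p, q, hp, hq, hpc, hqc, fun w hwp hwq => ?_⟩
  obtain ⟨m, hm, rfl⟩ := hps w hwp
  obtain ⟨m', hm', hmm'⟩ := hqs _ hwq
  have := hinj ⟨hm'.1.trans' (by omega), hm'.2⟩ ⟨hm.1, hm.2.trans (by omega)⟩ hmm'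
  simp only [Set.mem_Icc] at hm hm'
  omega

def HasCycleThrough {u v : V} (c : G.Walk u v) (e f : Sym2 V) : Prop :=
  ∃ (w : V) (C : G.Walk w w), C.IsCycle ∧ e ∈ C.edges ∧ f ∈ C.edges ∧
    ∀ g ∈ C.edges, g = e ∨ g = f ∨ g ∈ c.edges

theorem HasCycleThrough.symm {u v : V} {c : G.Walk u v} {e f : Sym2 V}
    (h : c.HasCycleThrough e f) : c.HasCycleThrough f e := by
  obtain ⟨w, C, hC, he, hf, hg⟩ := h
  exact ⟨w, C, hC, hf, he, fun g hg' => by grind⟩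

theorem HasCycleThrough.mono {u v u' v' : V} {c : G.Walk u v} {d : G.Walk u' v'}
    {e f : Sym2 V} (h : c.HasCycleThrough e f) (hcd : c.edges ⊆ d.edges) :
    d.HasCycleThrough e f := by
  obtain ⟨w, C, hC, he, hf, hg⟩ := h
  exact ⟨w, C, hC, he, hf, fun g hg' => by grind⟩

theorem hasCycleThrough_of_isPath {u v u₁ v₁ u₂ v₂ : V} {c : G.Walk u v}
    {p : G.Walk u₁ v₁} {q : G.Walk u₂ v₂} (hp : p.IsPath) (hq : q.IsPath)
    (hpq : ∀ w ∈ p.support, w ∉ q.support) (h₁ : G.Adj v₁ u₂) (h₂ : G.Adj v₂ u₁)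
    (hne : s(v₁, u₂) ≠ s(v₂, u₁)) (hpc : p.edges ⊆ c.edges) (hqc : q.edges ⊆ c.edges) :
    c.HasCycleThrough s(v₁, u₂) s(v₂, u₁) := by
  refine ⟨v₂, _, isCycle_cons_append_cons hp hq hpq h₁ h₂ hne, by simp, by simp, ?_⟩
  intro g hg
  simp only [edges_cons, edges_append, List.mem_cons, List.mem_append] at hg
  grind

theorem IsCycle.hasCycleThrough_getVert {x : V} {c : G.Walk x x} (hc : c.IsCycle) {a b d : ℕ}
    (ha : 0 < a) (han : a < c.length) (hbd : b < d) (hd : d < c.length)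
    (he : G.Adj x (c.getVert a)) (hf : G.Adj (c.getVert b) (c.getVert d))
    (hef : s(x, c.getVert a) ≠ s(c.getVert b, c.getVert d)) :
    c.HasCycleThrough s(x, c.getVert a) s(c.getVert b, c.getVert d) := by
  have he' : G.Adj (c.getVert a) (c.getVert 0) := by simpa using he.symm
  have hef' : s(c.getVert b, c.getVert d) ≠ s(c.getVert a, c.getVert 0) := by
    simpa [Sym2.eq_swap] using hef.symm
  rw [show s(x, c.getVert a) = s(c.getVert a, c.getVert 0) by simp [Sym2.eq_swap]]
  refine HasCycleThrough.symm ?_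
  rcases le_or_gt a b with hab | hba
  · -- `c` visits `x, a, b, d` in this order; use the arcs `a..b` and `d..x`
    obtain ⟨p, q, hp, hq, hpc, hqc, hpq⟩ :=
      hc.exists_disjoint_isPath_getVert hab hbd hd.le le_rfl (.inl ha)
    have hx : c.getVert c.length = c.getVert 0 := by simp
    convert hasCycleThrough_of_isPath hp hq hpq hf (by rw [hx]; exact he'.symm) ?_ hpc hqc
      using 1
    · rw [hx, Sym2.eq_swap]
    · rwa [hx, Sym2.eq_swap (a := c.getVert 0)]
  rcases lt_or_ge a d with had | hda
  · -- crossing chords; use the arcs `x..b` and `d..a`, the latter backwards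
    obtain ⟨p, q, hp, hq, hpc, hqc, hpq⟩ :=
      hc.exists_disjoint_isPath_getVert b.zero_le hba had.le hd.le (.inr hd)
    refine hasCycleThrough_of_isPath hp hq.reverse ?_ hf he' hef' hpc ?_
    · simpa using hpq
    · simpa using hqc
  · -- nested chords; use the arcs `x..b` and `d..a`
    obtain ⟨p, q, hp, hq, hpc, hqc, hpq⟩ :=
      hc.exists_disjoint_isPath_getVert b.zero_le hbd hda han.le (.inr han)
    exact hasCycleThrough_of_isPath hp hq hpq hf he' hef' hpc hqc

theorem IsCycle.hasCycleThrough {u : V} {c : G.Walk u u} (hc : c.IsCycle) {e f : Sym2 V}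
    (he : e ∈ G.edgeSet) (hf : f ∈ G.edgeSet) (hef : e ≠ f)
    (hec : ∀ v ∈ e, v ∈ c.support) (hfc : ∀ v ∈ f, v ∈ c.support) :
    c.HasCycleThrough e f := by
  classical
  induction e using Sym2.ind with | _ x y => ?_
  induction f using Sym2.ind with | _ z w => ?_
  have hx : x ∈ c.support := hec x (Sym2.mem_mk_left x y)
  let c' := c.rotate x hx
  suffices c'.HasCycleThrough s(x, y) s(z, w) from
    this.mono fun g hg => (c.rotate_edges x hx).mem_iff.mp hg
  have hc' : c'.IsCycle := hc.rotate hx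
  have hpos : 0 < c'.length := hc'.three_le_length.trans_lt' (by norm_num)
  have hmem : ∀ v, v ∈ c.support → ∃ k < c'.length, c'.getVert k = v := fun v hv =>
    exists_lt_length_getVert_eq hpos ((c.mem_support_rotate_iff x hx).mpr hv)
  obtain ⟨a, ha, rfl⟩ := hmem y (hec y (Sym2.mem_mk_right x y))
  obtain ⟨b, hb, rfl⟩ := hmem z (hfc z (Sym2.mem_mk_left z w))
  obtain ⟨d, hd, rfl⟩ := hmem w (hfc w (Sym2.mem_mk_right _ w))
  rw [SimpleGraph.mem_edgeSet] at he hf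
  have ha0 : 0 < a := Nat.pos_of_ne_zero fun h => he.ne (by simp [c', h])
  rcases lt_trichotomy b d with hbd | rfl | hdb
  · exact hc'.hasCycleThrough_getVert ha0 ha hbd hd he hf hef
  · exact absurd rfl hf.ne
  · rw [Sym2.eq_swap (a := c'.getVert b)] at hef ⊢
    exact hc'.hasCycleThrough_getVert ha0 ha hdb hb he hf.symm hef

theorem HasCycleThrough.exists_isCycle_edges_diff_eq {u v : V} {c : G.Walk u v} {e f : Sym2 V}
    (h : c.HasCycleThrough e f) (he : e ∉ c.edges) (hf : f ∉ c.edges) :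
    ∃ (w : V) (C : G.Walk w w), C.IsCycle ∧ {g | g ∈ C.edges} \ {g | g ∈ c.edges} = {e, f} := by
  obtain ⟨w, C, hC, heC, hfC, hg⟩ := h
  refine ⟨w, C, hC, Set.ext fun g => ?_⟩
  simp only [Set.mem_sdiff, Set.mem_ofPred_eq, Set.mem_insert_iff, Set.mem_singleton_iff]
  grind

theorem IsTrail.card_edgeFinset_sdiff_edges [Fintype V] [DecidableEq V] [Fintype G.edgeSet]
    {u v : V} {c : G.Walk u v} (hc : c.IsTrail) :
    (G.edgeFinset \ c.edges.toFinset).card = G.edgeFinset.card - c.length := by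
  rw [Finset.card_sdiff_of_subset fun g hg => by
      simpa using c.edges_subset_edgeSet (List.mem_toFinset.mp hg),
    List.toFinset_card_of_nodup hc.edges_nodup, length_edges]

end SimpleGraph.Walk

theorem NoRepeatedCycleLength.card_le {V : Type*} [Fintype V] {G : SimpleGraph V}
    (hG : NoRepeatedCycleLength G) (T : Set (Sym2 V)) (𝒮 : Finset (Finset (Sym2 V)))
    (h𝒮 : ∀ s ∈ 𝒮, ∃ (u : V) (C : G.Walk u u), C.IsCycle ∧ {g | g ∈ C.edges} \ T = ↑s) :
    𝒮.card ≤ Fintype.card V - 2 := by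
  have : ∀ s ∈ 𝒮, ∃ ℓ ∈ Finset.Icc 3 (Fintype.card V), ∃ (u : V) (C : G.Walk u u),
      C.IsCycle ∧ C.length = ℓ ∧ {g | g ∈ C.edges} \ T = ↑s := by
    intro s hs
    obtain ⟨u, C, hC, hCs⟩ := h𝒮 s hs
    exact ⟨C.length, Finset.mem_Icc.mpr ⟨hC.three_le_length, hC.length_le_card⟩,
      u, C, hC, rfl, hCs⟩
  choose! ℓ hℓ hcyc using this
  calc 𝒮.card ≤ (Finset.Icc 3 (Fintype.card V)).card := Finset.card_le_card_of_injOn ℓ hℓ ?_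
    _ = Fintype.card V - 2 := by simp
  intro s hs t ht hst
  obtain ⟨u, C, hC, hCℓ, hCs⟩ := hcyc s hs
  obtain ⟨v, D, hD, hDℓ, hDt⟩ := hcyc t ht
  have hCD := hG u v C D hC hD (hCℓ.trans (hst.trans hDℓ.symm))
  exact_mod_cast hCs.symm.trans (hCD ▸ hDt)

theorem stmt11_general (n : ℕ) (G : SimpleGraph (Fin n)) (m : ℕ)
    (hm : G.edgeSet.ncard = m) (hham : IsHamiltonianGraph G)
    (hnr : NoRepeatedCycleLength G) :
    Nat.choose (m - n) 2 < n := by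
  classical
  obtain ⟨x, c, hc, hlen⟩ := hham
  have hspan : ∀ v, v ∈ c.support :=
    ((Walk.isHamiltonianCycle_iff_isCycle_and_length_eq).mpr ⟨hc, hlen⟩).mem_support
  rw [Fintype.card_fin] at hlen
  let chords := G.edgeFinset \ c.edges.toFinset
  have hchords : chords.card = m - n := by
    rw [hc.isCircuit.isTrail.card_edgeFinset_sdiff_edges, ← hm, ← coe_edgeFinset,
      Set.ncard_coe_finset, hlen]
  have hpairs : ∀ s ∈ chords.powersetCard 2, ∃ (u : Fin n) (C : G.Walk u u),
      C.IsCycle ∧ {g | g ∈ C.edges} \ {g | g ∈ c.edges} = ↑s := by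
    intro s hs
    obtain ⟨hsub, hcard⟩ := Finset.mem_powersetCard.mp hs
    obtain ⟨e, f, hef, rfl⟩ := Finset.card_eq_two.mp hcard
    have he : e ∈ G.edgeSet ∧ e ∉ c.edges := by simpa [chords] using hsub (by simp)
    have hf : f ∈ G.edgeSet ∧ f ∉ c.edges := by simpa [chords] using hsub (by simp)
    simpa using (hc.hasCycleThrough he.1 hf.1 hef (fun v _ => hspan v)
      (fun v _ => hspan v)).exists_isCycle_edges_diff_eq he.2 hf.2
  calc Nat.choose (m - n) 2 = (chords.powersetCard 2).card := by
        rw [Finset.card_powersetCard, hchords]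
    _ ≤ Fintype.card (Fin n) - 2 := hnr.card_le _ _ hpairs
    _ < n := by rw [Fintype.card_fin]; have := x.pos; omega

/-- If `n ≥ 3` and `G` is an `n`-vertex Hamiltonian graph with `m` edges and no two cycles
of the same length, then the number `k = m - n` of chords (edges outside a Hamiltonian
cycle) satisfies `C(k, 2) < n`. -/
theorem stmt11 (n : ℕ) (hn : 3 ≤ n) (G : SimpleGraph (Fin n)) (m : ℕ)
    (hm : G.edgeSet.ncard = m) (hham : IsHamiltonianGraph G)
    (hnr : NoRepeatedCycleLength G) :
    Nat.choose (m - n) 2 < n :=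
  stmt11_general n G m hm hham hnr
end

section
/- For all n ≥ 3, g(n) < n + √(2n) + 1. -/
/-- `g n` is the maximum number of edges in an `n`-vertex Hamiltonian graph in which
no two cycles have the same length. -/
noncomputable def g (n : ℕ) : ℕ :=
  sSup {m | ∃ G : SimpleGraph (Fin n),
    G.edgeSet.ncard = m ∧ IsHamiltonianGraph G ∧ NoRepeatedCycleLength G}

namespace SimpleGraph

variable {V : Type*} {G : SimpleGraph V}

def HasCycleWithExtraEdges (G : SimpleGraph V) (H S : Set (Sym2 V)) : Prop :=
  ∃ (u : V) (w : G.Walk u u), w.IsCycle ∧ {e | e ∈ w.edges} \ H = S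

lemma HasCycleWithExtraEdges.pair_comm {H : Set (Sym2 V)} {e₁ e₂ : Sym2 V}
    (h : G.HasCycleWithExtraEdges H {e₁, e₂}) : G.HasCycleWithExtraEdges H {e₂, e₁} := by
  rwa [Set.pair_comm]

namespace Walk

theorem IsCycle.length_le_card_s12 [Fintype V] {u : V} {w : G.Walk u u} (hw : w.IsCycle) :
    w.length ≤ Fintype.card V := by
  have := hw.isPath_tail.length_lt
  rw [← length_tail_add_one hw.not_nil]
  omega

lemma getVert_mod_length {u : V} (p : G.Walk u u) {j : ℕ} (hj : j ≤ p.length) :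
    p.getVert (j % p.length) = p.getVert j := by
  rcases hj.lt_or_eq with hj | rfl
  · rw [Nat.mod_eq_of_lt hj]
  · rw [Nat.mod_self, getVert_zero, getVert_length]

theorem isCycle_cons_append_cons_s12 {u v x y : V} {P : G.Walk u v} {Q : G.Walk x y}
    (hP : P.IsPath) (hQ : Q.IsPath) (hPQ : P.support.Disjoint Q.support)
    (hvx : G.Adj v x) (hyu : G.Adj y u) (hne : s(v, x) ≠ s(y, u)) :
    (cons hyu (P.append (cons hvx Q))).IsCycle := by
  rw [cons_isCycle_iff]
  refine ⟨IsPath.mk' ?_, ?_⟩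
  · rw [support_append, support_cons, List.tail_cons, List.nodup_append]
    exact ⟨hP.support_nodup, hQ.support_nodup, fun a ha b hb hab => hPQ ha (hab ▸ hb)⟩
  · rw [edges_append, edges_cons, List.mem_append, List.mem_cons]
    rintro (h | h | h)
    · exact hPQ (P.fst_mem_support_of_mem_edges h) Q.end_mem_support
    · exact hne h.symm
    · exact hPQ P.start_mem_support (Q.snd_mem_support_of_mem_edges h)

end Walk

theorem hasCycleWithExtraEdges_pair {H : Set (Sym2 V)} {u v x y : V}
    {P : G.Walk u v} {Q : G.Walk x y} (hP : P.IsPath) (hQ : Q.IsPath)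
    (hPQ : P.support.Disjoint Q.support) (hPH : ∀ e ∈ P.edges, e ∈ H)
    (hQH : ∀ e ∈ Q.edges, e ∈ H) (hvx : G.Adj v x) (hyu : G.Adj y u)
    (hvxH : s(v, x) ∉ H) (hyuH : s(y, u) ∉ H) (hne : s(v, x) ≠ s(y, u)) :
    G.HasCycleWithExtraEdges H {s(v, x), s(y, u)} := by
  refine ⟨y, _, Walk.isCycle_cons_append_cons_s12 hP hQ hPQ hvx hyu hne, ?_⟩
  ext e
  simp only [Set.mem_sdiff, Walk.edges_cons, Walk.edges_append, List.mem_cons, List.mem_append,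
    Set.mem_ofPred_eq, Set.mem_insert_iff, Set.mem_singleton_iff]
  constructor
  · rintro ⟨rfl | h | rfl | h, he⟩
    · exact Or.inr rfl
    · exact absurd (hPH e h) he
    · exact Or.inl rfl
    · exact absurd (hQH e h) he
  · rintro (rfl | rfl)
    · exact ⟨Or.inr (Or.inr (Or.inl rfl)), hvxH⟩
    · exact ⟨Or.inl rfl, hyuH⟩

end SimpleGraph

open SimpleGraph

/-- A Hamiltonian cycle of `G` of length `n`, read as an `n`-periodic enumeration of the
vertices along the cycle. -/
structure HamiltonianLabeling {V : Type*} (G : SimpleGraph V) (n : ℕ) where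
  toFun : ℕ → V
  periodic : Function.Periodic toFun n
  adj : ∀ t, G.Adj (toFun t) (toFun (t + 1))
  injOn : Set.InjOn toFun (Set.Iio n)
  surjective : Function.Surjective toFun
  three_le : 3 ≤ n

namespace HamiltonianLabeling

variable {V : Type*} {G : SimpleGraph V} {n : ℕ}

instance : CoeFun (HamiltonianLabeling G n) fun _ => ℕ → V := ⟨toFun⟩

def ofIsHamiltonianCycle [DecidableEq V] {u : V} {p : G.Walk u u} (hp : p.IsHamiltonianCycle) :
    HamiltonianLabeling G p.length where
  toFun t := p.getVert (t % p.length)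
  periodic t := by simp only [Nat.add_mod_right]
  adj t := by
    have h3 := hp.isCycle.three_le_length
    have hlt := Nat.mod_lt t (by omega : 0 < p.length)
    rw [Nat.add_mod, Nat.mod_eq_of_lt (by omega : 1 < p.length), p.getVert_mod_length hlt]
    exact p.adj_getVert_succ hlt
  injOn s hs t ht hst := by
    simp only [Set.mem_Iio] at hs ht
    simp only [Nat.mod_eq_of_lt hs, Nat.mod_eq_of_lt ht] at hst
    exact hp.isCycle.getVert_injOn' (by grind) (by grind) hst
  surjective v := by
    obtain ⟨j, rfl, hj⟩ := Walk.mem_support_iff_exists_getVert.mp (hp.mem_support v)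
    exact ⟨j, p.getVert_mod_length hj⟩
  three_le := hp.isCycle.three_le_length

variable (L : HamiltonianLabeling G n)

lemma pos (L : HamiltonianLabeling G n) : 0 < n := by have := L.three_le; omega

lemma eq_of_apply_eq {s t : ℕ} (hst : s ≤ t) (hts : t < s + n) (h : L s = L t) : s = t := by
  have hmod : s % n = t % n :=
    L.injOn (Nat.mod_lt _ L.pos) (Nat.mod_lt _ L.pos)
      (by simpa only [L.periodic.map_mod_nat] using h)
  have := Nat.eq_zero_of_dvd_of_lt ((Nat.modEq_iff_dvd' hst).mp hmod) (by omega : t - s < n)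
  omega

lemma exists_lt_apply_eq (v : V) : ∃ i < n, L i = v := by
  obtain ⟨t, rfl⟩ := L.surjective v
  exact ⟨t % n, Nat.mod_lt _ L.pos, L.periodic.map_mod_nat t⟩

lemma card_le [Fintype V] (L : HamiltonianLabeling G n) : Fintype.card V ≤ n := by
  simpa using Finset.card_le_card_of_surjOn L (s := Finset.range n) (t := Finset.univ)
    fun v _ => by simpa using L.exists_lt_apply_eq v

def edge (t : ℕ) : Sym2 V := s(L t, L (t + 1))

def edges : Set (Sym2 V) := Set.range L.edge

def chords : Set (Sym2 V) := G.edgeSet \ L.edges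

lemma edges_subset : L.edges ⊆ G.edgeSet := by
  rintro _ ⟨t, rfl⟩
  exact L.adj t

lemma edge_periodic : Function.Periodic L.edge n := fun t => by
  rw [edge, edge, L.periodic, Nat.add_right_comm, L.periodic]

lemma edges_eq_image : L.edges = L.edge '' Set.Iio n := by
  ext e
  constructor
  · rintro ⟨t, rfl⟩
    exact ⟨t % n, Nat.mod_lt _ L.pos, L.edge_periodic.map_mod_nat t⟩
  · rintro ⟨t, -, rfl⟩
    exact ⟨t, rfl⟩

lemma edge_injOn : Set.InjOn L.edge (Set.Iio n) := by
  intro s hs t ht h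
  wlog hst : s ≤ t generalizing s t
  · exact (this ht hs h.symm (by omega)).symm
  have := L.three_le
  simp only [Set.mem_Iio] at hs ht
  rcases Sym2.eq_iff.mp h with ⟨h₁, -⟩ | ⟨h₁, h₂⟩
  · exact L.eq_of_apply_eq hst (by omega) h₁
  rcases hst.eq_or_lt with rfl | hlt
  · have := L.eq_of_apply_eq (by omega) (by omega) h₂.symm
    omega
  · obtain rfl := L.eq_of_apply_eq (by omega) (by omega) h₂
    have := L.eq_of_apply_eq (by omega) (by omega) h₁
    omega

lemma ncard_edges : L.edges.ncard = n := by
  rw [L.edges_eq_image, L.edge_injOn.ncard_image, Set.ncard_Iio_nat]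

lemma ncard_edgeSet [Finite V] : G.edgeSet.ncard = n + L.chords.ncard := by
  have := Set.ncard_sdiff_add_ncard_of_subset L.edges_subset (Set.toFinite _)
  rw [L.ncard_edges] at this
  rw [chords]
  omega

def arc (i : ℕ) : (k : ℕ) → G.Walk (L i) (L (i + k))
  | 0 => .nil
  | k + 1 => (arc i k).concat (L.adj (i + k))

lemma mem_support_arc {i k : ℕ} {v : V} :
    v ∈ (L.arc i k).support ↔ ∃ t, i ≤ t ∧ t ≤ i + k ∧ L t = v := by
  induction k with
  | zero =>
    simp only [arc, Walk.support_nil, List.mem_singleton, Nat.add_zero]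
    exact ⟨fun h => ⟨i, le_rfl, le_rfl, h.symm⟩, fun ⟨t, h₁, h₂, ht⟩ => by
      rw [← ht, le_antisymm h₂ h₁]⟩
  | succ k ih =>
    simp only [arc, Walk.support_concat, List.mem_append, ih, List.mem_singleton]
    constructor
    · rintro (⟨t, h₁, h₂, rfl⟩ | rfl)
      · exact ⟨t, h₁, by omega, rfl⟩
      · exact ⟨i + k + 1, by omega, le_rfl, rfl⟩
    · rintro ⟨t, h₁, h₂, rfl⟩
      rcases Nat.lt_or_ge t (i + k + 1) with h | h
      · exact Or.inl ⟨t, h₁, by omega, rfl⟩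
      · exact Or.inr (by rw [show t = i + k + 1 by omega]; rfl)

lemma mem_edges_of_mem_edges_arc {i k : ℕ} {e : Sym2 V} (he : e ∈ (L.arc i k).edges) :
    e ∈ L.edges := by
  induction k with
  | zero => simp [arc] at he
  | succ k ih =>
    simp only [arc, Walk.edges_concat, List.concat_eq_append, List.mem_append,
      List.mem_singleton] at he
    rcases he with he | rfl
    · exact ih he
    · exact ⟨i + k, rfl⟩

lemma isPath_arc {i k : ℕ} (hk : k < n) : (L.arc i k).IsPath := by
  induction k with
  | zero => exact Walk.IsPath.nil
  | succ k ih =>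
    refine (ih (by omega)).concat ?_ _
    rw [mem_support_arc]
    rintro ⟨t, h₁, h₂, ht⟩
    have := L.eq_of_apply_eq (by omega) (by omega) ht
    omega

lemma disjoint_support_arc {i k j l : ℕ} (h₁ : i + k < j) (h₂ : j + l < i + n) :
    (L.arc i k).support.Disjoint (L.arc j l).support := by
  intro v hv hv'
  obtain ⟨s, hs₁, hs₂, rfl⟩ := L.mem_support_arc.mp hv
  obtain ⟨t, ht₁, ht₂, hst⟩ := L.mem_support_arc.mp hv'
  have := L.eq_of_apply_eq (by omega) (by omega) hst.symm
  omega

lemma hasCycleWithExtraEdges_arcs {i k j l : ℕ} (h₁ : i + k < j) (h₂ : j + l < i + n)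
    (hvx : s(L (i + k), L j) ∈ L.chords) (hyu : s(L (j + l), L i) ∈ L.chords)
    (hne : s(L (i + k), L j) ≠ s(L (j + l), L i)) :
    G.HasCycleWithExtraEdges L.edges {s(L (i + k), L j), s(L (j + l), L i)} :=
  hasCycleWithExtraEdges_pair (L.isPath_arc (by omega)) (L.isPath_arc (by omega))
    (L.disjoint_support_arc h₁ h₂) (fun _ => L.mem_edges_of_mem_edges_arc)
    (fun _ => L.mem_edges_of_mem_edges_arc) hvx.1 hyu.1 hvx.2 hyu.2 hne

lemma hasCycleWithExtraEdges_arc_reverse {i k j l : ℕ} (h₁ : i + k < j) (h₂ : j + l < i + n)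
    (hvx : s(L (i + k), L (j + l)) ∈ L.chords) (hyu : s(L j, L i) ∈ L.chords)
    (hne : s(L (i + k), L (j + l)) ≠ s(L j, L i)) :
    G.HasCycleWithExtraEdges L.edges {s(L (i + k), L (j + l)), s(L j, L i)} :=
  hasCycleWithExtraEdges_pair (L.isPath_arc (by omega)) (L.isPath_arc (by omega)).reverse
    (by simpa only [Walk.support_reverse, List.disjoint_reverse_right]
      using L.disjoint_support_arc h₁ h₂)
    (fun _ => L.mem_edges_of_mem_edges_arc)
    (fun _ he => L.mem_edges_of_mem_edges_arc
      (by rwa [Walk.edges_reverse, List.mem_reverse] at he))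
    hvx.1 hyu.1 hvx.2 hyu.2 hne

variable {a b c d : ℕ}

lemma hasCycleWithExtraEdges_of_disjoint (hab : a < b) (hbc : b ≤ c) (hcd : c < d)
    (hda : d < a + n) (h₁ : s(L a, L b) ∈ L.chords) (h₂ : s(L c, L d) ∈ L.chords)
    (hne : s(L a, L b) ≠ s(L c, L d)) :
    G.HasCycleWithExtraEdges L.edges {s(L a, L b), s(L c, L d)} := by
  obtain ⟨k, rfl⟩ := Nat.exists_eq_add_of_le hbc
  obtain ⟨l, hl⟩ : ∃ l, d + l = a + n := ⟨a + n - d, by omega⟩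
  have := L.hasCycleWithExtraEdges_arcs (i := b) (k := k) (j := d) (l := l) (by omega) (by omega)
  rw [hl, L.periodic] at this
  exact (this h₂ h₁ hne.symm).pair_comm

lemma hasCycleWithExtraEdges_of_nested (hac : a ≤ c) (hcd : c < d) (hdb : d ≤ b)
    (hba : b < a + n) (h₁ : s(L a, L b) ∈ L.chords) (h₂ : s(L c, L d) ∈ L.chords)
    (hne : s(L a, L b) ≠ s(L c, L d)) :
    G.HasCycleWithExtraEdges L.edges {s(L a, L b), s(L c, L d)} := by
  obtain ⟨k, rfl⟩ := Nat.exists_eq_add_of_le hac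
  obtain ⟨l, rfl⟩ := Nat.exists_eq_add_of_le hdb
  have := L.hasCycleWithExtraEdges_arcs (i := a) (k := k) (j := d) (l := l) (by omega) (by omega)
  rw [Sym2.eq_swap (a := L (d + l))] at this
  exact (this h₂ h₁ hne.symm).pair_comm

lemma hasCycleWithExtraEdges_of_crossing (hac : a < c) (hcb : c < b) (hbd : b < d)
    (hda : d < a + n) (h₁ : s(L a, L b) ∈ L.chords) (h₂ : s(L c, L d) ∈ L.chords)
    (hne : s(L a, L b) ≠ s(L c, L d)) :
    G.HasCycleWithExtraEdges L.edges {s(L a, L b), s(L c, L d)} := by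
  obtain ⟨k, rfl⟩ := Nat.exists_eq_add_of_le hcb.le
  obtain ⟨l, hl⟩ : ∃ l, d + l = a + n := ⟨a + n - d, by omega⟩
  have := L.hasCycleWithExtraEdges_arc_reverse (i := c) (k := k) (j := d) (l := l)
    (by omega) (by omega)
  rw [hl, L.periodic, Sym2.eq_swap (a := L (c + k)), Sym2.eq_swap (a := L d)] at this
  exact this h₁ h₂ hne

lemma exists_lt_lt_eq_of_mem_edgeSet {e : Sym2 V} (he : e ∈ G.edgeSet) :
    ∃ a b, a < b ∧ b < n ∧ e = s(L a, L b) := by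
  induction e using Sym2.ind with | _ x y =>
  obtain ⟨i, hi, rfl⟩ := L.exists_lt_apply_eq x
  obtain ⟨j, hj, rfl⟩ := L.exists_lt_apply_eq y
  rcases lt_or_gt_of_ne (fun hij : i = j => G.ne_of_adj he (by rw [hij])) with h | h
  · exact ⟨i, j, h, hj, rfl⟩
  · exact ⟨j, i, h, hi, Sym2.eq_swap⟩

theorem hasCycleWithExtraEdges_of_chords {e₁ e₂ : Sym2 V} (h₁ : e₁ ∈ L.chords)
    (h₂ : e₂ ∈ L.chords) (hne : e₁ ≠ e₂) : G.HasCycleWithExtraEdges L.edges {e₁, e₂} := by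
  obtain ⟨a, b, hab, hbn, rfl⟩ := L.exists_lt_lt_eq_of_mem_edgeSet h₁.1
  obtain ⟨c, d, hcd, hdn, rfl⟩ := L.exists_lt_lt_eq_of_mem_edgeSet h₂.1
  wlog hac : a < c ∨ a = c ∧ b < d generalizing a b c d
  · refine (this c d hcd hdn h₂ a b hab hbn h₁ hne.symm ?_).pair_comm
    have : ¬(a = c ∧ b = d) := by
      rintro ⟨rfl, rfl⟩
      exact hne rfl
    omega
  rcases le_or_gt b c with hbc | hcb
  · exact L.hasCycleWithExtraEdges_of_disjoint hab hbc hcd (by omega) h₁ h₂ hne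
  rcases le_or_gt d b with hdb | hbd
  · exact L.hasCycleWithExtraEdges_of_nested (by omega) hcd hdb (by omega) h₁ h₂ hne
  rcases hac with hac | ⟨rfl, -⟩
  · exact L.hasCycleWithExtraEdges_of_crossing hac hcb hbd (by omega) h₁ h₂ hne
  · exact (L.hasCycleWithExtraEdges_of_nested le_rfl hab hbd.le (by omega) h₂ h₁
      hne.symm).pair_comm

theorem choose_two_ncard_chords_le [Fintype V] (hG : NoRepeatedCycleLength G) :
    L.chords.ncard.choose 2 ≤ n - 2 := by
  classical
  rw [Set.ncard_eq_toFinset_card _ (Set.toFinite _), ← Finset.card_powersetCard]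
  refine le_trans ?_ ((Nat.card_Icc 3 n).trans_le (by omega))
  refine Finset.card_le_card_of_forall_subsingleton
    (fun (S : Finset (Sym2 V)) (m : ℕ) => ∃ (u : V) (w : G.Walk u u), w.IsCycle ∧ w.length = m ∧
      {e | e ∈ w.edges} \ L.edges = ↑S) ?_ ?_
  · intro S hS
    obtain ⟨hSC, hS2⟩ := Finset.mem_powersetCard.mp hS
    obtain ⟨e₁, e₂, hne, rfl⟩ := Finset.card_eq_two.mp hS2
    obtain ⟨u, w, hw, hwS⟩ := L.hasCycleWithExtraEdges_of_chords
      (by simpa using hSC (Finset.mem_insert_self _ _))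
      (by simpa using hSC (Finset.mem_insert_of_mem (Finset.mem_singleton_self _))) hne
    exact ⟨w.length, Finset.mem_Icc.mpr ⟨hw.three_le_length, hw.length_le_card_s12.trans L.card_le⟩,
      u, w, hw, rfl, by rw [hwS, Finset.coe_pair]⟩
  · rintro m - S ⟨-, u, w, hw, rfl, hwS⟩ T ⟨-, v, w', hw', hlen, hw'T⟩
    rw [hG u v w w' hw hw' hlen.symm] at hwS
    exact Finset.coe_injective (hwS.symm.trans hw'T)

end HamiltonianLabeling

lemma Nat.cast_lt_sqrt_two_mul_add_one_of_choose_two_lt {k n : ℕ} (h : k.choose 2 < n) :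
    (k : ℝ) < √(2 * n) + 1 := by
  have h' : (k : ℝ) * (k - 1) < 2 * n := by
    have : ((k.choose 2 : ℕ) : ℝ) < n := by exact_mod_cast h
    rw [Nat.cast_choose_two] at this
    linarith
  rcases lt_or_ge (k : ℝ) 1 with hk | hk
  · linarith [Real.sqrt_nonneg (2 * n)]
  · have := (Real.lt_sqrt (by linarith)).mpr (by nlinarith : ((k : ℝ) - 1) ^ 2 < 2 * n)
    linarith

theorem ncard_edgeSet_lt_of_isHamiltonianCycle {V : Type*} [Fintype V] [DecidableEq V]
    {G : SimpleGraph V} {u : V} {p : G.Walk u u} (hp : p.IsHamiltonianCycle)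
    (hG : NoRepeatedCycleLength G) :
    (G.edgeSet.ncard : ℝ) < Fintype.card V + √(2 * Fintype.card V) + 1 := by
  let L := HamiltonianLabeling.ofIsHamiltonianCycle hp
  have hk := L.choose_two_ncard_chords_le hG
  rw [L.ncard_edgeSet, ← hp.length_eq]
  push_cast
  linarith [Nat.cast_lt_sqrt_two_mul_add_one_of_choose_two_lt (n := p.length)
    (k := L.chords.ncard) (by have := L.three_le; omega)]

lemma Nat.cast_sSup_lt {S : Set ℕ} {x : ℝ} (hx : 0 < x) (h : ∀ m ∈ S, (m : ℝ) < x) :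
    ((sSup S : ℕ) : ℝ) < x := by
  rcases S.eq_empty_or_nonempty with rfl | hS
  · simpa using hx
  · exact h _ (Nat.sSup_mem hS ⟨⌊x⌋₊, fun m hm => Nat.le_floor (h m hm).le⟩)

theorem stmt12_general (n : ℕ) :
    (g n : ℝ) < (n : ℝ) + Real.sqrt (2 * n) + 1 := by
  refine Nat.cast_sSup_lt (by positivity) ?_
  rintro _ ⟨G, rfl, ⟨u, p, hp, hlen⟩, hG⟩
  have hH : p.IsHamiltonianCycle :=
    Walk.isHamiltonianCycle_iff_isCycle_and_length_eq.mpr ⟨hp, hlen⟩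
  simpa using ncard_edgeSet_lt_of_isHamiltonianCycle hH hG

/-- For all `n ≥ 3`, `g(n) < n + √(2n) + 1`. -/
theorem stmt12 (n : ℕ) (hn : 3 ≤ n) :
    (g n : ℝ) < (n : ℝ) + Real.sqrt (2 * n) + 1 :=
  stmt12_general n
end
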